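/- arXiv:2306.06484 — 12 statements merged into one kernel-verified Lean document; each statement's English description precedes it below -/
import Mathlib

section
/- Let C ⊆ X be a G-invariant open convex set and let x₀ ∈ X \ C be a G-invariant point. Then there exists a G-invariant continuous linear functional f ∈ X*_G such that f(x) < f(x₀) for all x ∈ C. -/
open MeasureTheory Measure TopologicalSpace

/-- **Group invariant Hahn-Banach separation lemma.**
If `C ⊆ X` is a `G`-invariant open convex set and `x₀ ∈ X \ C` is a `G`-invariant point,
then there is a `G`-invariant continuous linear functional `f` with `f x < f x₀` on `C`. -/
theorem group_invariant_separation_point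
    {X : Type*} [NormedAddCommGroup X] [NormedSpace ℝ X] [CompleteSpace X]
    {G : Type*} [Group G] [TopologicalSpace G] [IsTopologicalGroup G] [CompactSpace G]
    (ρ : G →* (X ≃L[ℝ] X))
    (hactcont : Continuous fun p : G × X => ρ p.1 p.2)
    (hnorminv : ∀ (g : G) (x : X), ‖ρ g x‖ = ‖x‖)
    (C : Set X) (hCopen : IsOpen C) (hCconv : Convex ℝ C)
    (hCinv : ∀ g : G, (fun x => ρ g x) '' C = C)
    (x₀ : X) (hx₀C : x₀ ∉ C) (hx₀inv : ∀ g : G, ρ g x₀ = x₀) :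
    ∃ f : X →L[ℝ] ℝ, (∀ (g : G) (x : X), f (ρ g x) = f x) ∧ ∀ x ∈ C, f x < f x₀ := by
  haveI : Nonempty G := ⟨1⟩
  borelize G
  obtain ⟨f, hf⟩ := geometric_hahn_banach_open_point hCconv hCopen hx₀C
  set μ : Measure G := haarMeasure (⊤ : PositiveCompacts G) with hμ
  haveI : IsProbabilityMeasure μ := ⟨haarMeasure_self⟩
  -- the averaged integrand
  set k : X → G → ℝ := fun x g => f (ρ g⁻¹ x) with hk_def
  have hk : ∀ x, Continuous (k x) := by
    intro x
    exact f.continuous.comp (hactcont.comp ((continuous_inv).prodMk continuous_const))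
  have hInt : ∀ x, Integrable (k x) μ :=
    fun x => (hk x).integrable_of_hasCompactSupport (HasCompactSupport.of_compactSpace _)
  have hknorm : ∀ x g, ‖k x g‖ ≤ ‖f‖ * ‖x‖ := by
    intro x g
    calc ‖k x g‖ ≤ ‖f‖ * ‖ρ g⁻¹ x‖ := f.le_opNorm _
    _ = ‖f‖ * ‖x‖ := by rw [hnorminv]
  -- the averaged linear map
  set Flin : X →ₗ[ℝ] ℝ :=
    { toFun := fun x => ∫ g, k x g ∂μ
      map_add' := by
        intro x y
        have : k (x + y) = fun g => k x g + k y g := by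
          funext g
          show f (ρ g⁻¹ (x + y)) = f (ρ g⁻¹ x) + f (ρ g⁻¹ y)
          rw [(ρ g⁻¹).map_add, f.map_add]
        show (∫ g, k (x + y) g ∂μ) = (∫ g, k x g ∂μ) + ∫ g, k y g ∂μ
        rw [this, integral_add (hInt x) (hInt y)]
      map_smul' := by
        intro c x
        have : k (c • x) = fun g => c • k x g := by
          funext g
          show f (ρ g⁻¹ (c • x)) = c • f (ρ g⁻¹ x)
          rw [(ρ g⁻¹).map_smul, f.map_smul]
        show (∫ g, k (c • x) g ∂μ) = c • ∫ g, k x g ∂μ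
        rw [this, integral_smul] } with hFlin
  have hbound : ∀ x, ‖Flin x‖ ≤ ‖f‖ * ‖x‖ := by
    intro x
    calc ‖Flin x‖ = ‖∫ g, k x g ∂μ‖ := rfl
    _ ≤ ‖f‖ * ‖x‖ := by
        have := norm_integral_le_of_norm_le_const (μ := μ) (C := ‖f‖ * ‖x‖)
          (Filter.Eventually.of_forall (hknorm x))
        simpa using this
  refine ⟨Flin.mkContinuous (‖f‖) hbound, ?_, ?_⟩
  · -- invariance
    intro g₀ x
    have hpt : ∀ g : G, k (ρ g₀ x) g = k x (g₀⁻¹ * g) := by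
      intro g
      have : ρ g⁻¹ (ρ g₀ x) = ρ (g⁻¹ * g₀) x := by
        rw [map_mul]; rfl
      simp only [hk_def, this, mul_inv_rev, inv_inv]
    show (∫ g, k (ρ g₀ x) g ∂μ) = ∫ g, k x g ∂μ
    calc (∫ g, k (ρ g₀ x) g ∂μ) = ∫ g, k x (g₀⁻¹ * g) ∂μ := by
          simp only [hpt]
    _ = ∫ g, k x g ∂μ := integral_mul_left_eq_self (k x) g₀⁻¹
  · -- separation
    intro x hx
    have hx₀val : (∫ g, k x₀ g ∂μ) = f x₀ := by
      have : k x₀ = fun _ => f x₀ := by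
        funext g
        show f (ρ g⁻¹ x₀) = f x₀
        rw [hx₀inv]
      rw [this, integral_const]; simp
    have hmem : ∀ g : G, ρ g⁻¹ x ∈ C := by
      intro g
      have := hCinv g⁻¹
      rw [← this]
      exact ⟨x, hx, rfl⟩
    obtain ⟨gm, -, hgm⟩ := isCompact_univ.exists_isMaxOn Set.univ_nonempty
      (hk x).continuousOn
    have hlt : k x gm < f x₀ := hf _ (hmem gm)
    have hle : (∫ g, k x g ∂μ) ≤ k x gm := by
      calc (∫ g, k x g ∂μ) ≤ ∫ _, k x gm ∂μ :=
            integral_mono (hInt x) (integrable_const _) (fun g => hgm (Set.mem_univ g))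
      _ = k x gm := by rw [integral_const]; simp
    show (∫ g, k x g ∂μ) < Flin.mkContinuous (‖f‖) hbound x₀
    calc (∫ g, k x g ∂μ) ≤ k x gm := hle
    _ < f x₀ := hlt
    _ = ∫ g, k x₀ g ∂μ := hx₀val.symm
end

section
/- Let A, B ⊆ X be nonempty convex G-invariant sets with A open and A ∩ B = ∅. Then there exist a nonzero G-invariant continuous linear functional f ∈ X*_G and α ∈ ℝ such that f(x) ≤ α for every x ∈ A and f(y) ≥ α for every y ∈ B; that is, a G-invariant hyperplane separates A and B. -/
open MeasureTheory

/-- **First geometric Hahn-Banach form, group invariant version.**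
If `A`, `B` are nonempty convex `G`-invariant sets with `A` open and `A ∩ B = ∅`, then a
`G`-invariant hyperplane separates `A` and `B`. -/
theorem group_invariant_hahn_banach_separation
    {X : Type*} [NormedAddCommGroup X] [NormedSpace ℝ X] [CompleteSpace X]
    {G : Type*} [Group G] [TopologicalSpace G] [IsTopologicalGroup G] [CompactSpace G]
    (ρ : G →* (X ≃L[ℝ] X))
    (hactcont : Continuous fun p : G × X => ρ p.1 p.2)
    (hnorminv : ∀ (g : G) (x : X), ‖ρ g x‖ = ‖x‖)
    (A B : Set X) (hAne : A.Nonempty) (hBne : B.Nonempty)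
    (hAconv : Convex ℝ A) (hBconv : Convex ℝ B)
    (hAinv : ∀ g : G, (fun x => ρ g x) '' A = A)
    (hBinv : ∀ g : G, (fun x => ρ g x) '' B = B)
    (hAopen : IsOpen A) (hAB : A ∩ B = ∅) :
    ∃ f : X →L[ℝ] ℝ, f ≠ 0 ∧ (∀ (g : G) (x : X), f (ρ g x) = f x) ∧
      ∃ α : ℝ, (∀ x ∈ A, f x ≤ α) ∧ (∀ y ∈ B, α ≤ f y) := by
  obtain ⟨f, α, hfA, hfB⟩ := geometric_hahn_banach_open hAconv hAopen hBconv
    (Set.disjoint_iff_inter_eq_empty.mpr hAB)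
  letI : MeasurableSpace G := borel G
  haveI : BorelSpace G := ⟨rfl⟩
  set K₀ : TopologicalSpace.PositiveCompacts G :=
    ⟨⟨Set.univ, isCompact_univ⟩, by simp [Set.univ_nonempty]⟩ with hK₀
  set μ : Measure G := Measure.haarMeasure K₀ with hμ
  haveI : IsProbabilityMeasure μ := ⟨Measure.haarMeasure_self⟩
  -- continuity of the orbit maps
  have hcont : ∀ x : X, Continuous fun g : G => f (ρ g⁻¹ x) := fun x =>
    f.continuous.comp (hactcont.comp (continuous_inv.prodMk continuous_const))
  have hint : ∀ x : X, Integrable (fun g : G => f (ρ g⁻¹ x)) μ := fun x =>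
    (hcont x).integrable_of_hasCompactSupport
      (HasCompactSupport.of_compactSpace _)
  -- averaged functional
  have hbound : ∀ x : X, ‖∫ g, f (ρ g⁻¹ x) ∂μ‖ ≤ ‖f‖ * ‖x‖ := by
    intro x
    have h1 : ‖∫ g, f (ρ g⁻¹ x) ∂μ‖ ≤ (‖f‖ * ‖x‖) * (μ Set.univ).toReal :=
      norm_integral_le_of_norm_le_const (Filter.Eventually.of_forall fun g => by
        calc ‖f (ρ g⁻¹ x)‖ ≤ ‖f‖ * ‖ρ g⁻¹ x‖ := f.le_opNorm _
          _ = ‖f‖ * ‖x‖ := by rw [hnorminv])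
    simpa using h1
  set Fl : X →ₗ[ℝ] ℝ :=
    { toFun := fun x => ∫ g, f (ρ g⁻¹ x) ∂μ
      map_add' := fun x y => by
        simp only [map_add]
        exact integral_add (hint x) (hint y)
      map_smul' := fun c x => by
        simp only [_root_.map_smul, smul_eq_mul, RingHom.id_apply]
        exact integral_const_mul c _ } with hFl
  set F : X →L[ℝ] ℝ := Fl.mkContinuous ‖f‖ hbound with hF
  have hFapp : ∀ x : X, F x = ∫ g, f (ρ g⁻¹ x) ∂μ := fun x => rfl
  -- invariance
  have hFinv : ∀ (h : G) (x : X), F (ρ h x) = F x := by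
    intro h x
    rw [hFapp, hFapp]
    have key : ∀ g : G, f (ρ g⁻¹ (ρ h x)) = (fun g : G => f (ρ g⁻¹ x)) (h⁻¹ * g) := by
      intro g
      simp only [mul_inv_rev, inv_inv, map_mul]
      rfl
    calc ∫ g, f (ρ g⁻¹ (ρ h x)) ∂μ
        = ∫ g, (fun g : G => f (ρ g⁻¹ x)) (h⁻¹ * g) ∂μ := by simp_rw [key]
      _ = ∫ g, f (ρ g⁻¹ x) ∂μ := integral_mul_left_eq_self (μ := μ) (fun g : G => f (ρ g⁻¹ x)) h⁻¹
  -- membership under the action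
  have hAmem : ∀ (g : G) {x : X}, x ∈ A → ρ g x ∈ A := fun g hx => by
    intro h; exact (hAinv g) ▸ Set.mem_image_of_mem _ h
  have hBmem : ∀ (g : G) {y : X}, y ∈ B → ρ g y ∈ B := fun g hy => by
    intro h; exact (hBinv g) ▸ Set.mem_image_of_mem _ h
  -- bounds
  have hFA : ∀ x ∈ A, F x ≤ α := by
    intro x hx
    rw [hFapp]
    have : ∫ g, f (ρ g⁻¹ x) ∂μ ≤ ∫ _ : G, α ∂μ :=
      integral_mono (hint x) (integrable_const α)
        (fun g => (hfA _ (hAmem g⁻¹ hx)).le)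
    simpa using this
  have hFB : ∀ y ∈ B, α ≤ F y := by
    intro y hy
    rw [hFapp]
    have : ∫ _ : G, α ∂μ ≤ ∫ g, f (ρ g⁻¹ y) ∂μ :=
      integral_mono (integrable_const α) (hint y)
        (fun g => hfB _ (hBmem g⁻¹ hy))
    simpa using this
  -- strict bound at a point of A, giving nonvanishing
  obtain ⟨a, ha⟩ := hAne
  obtain ⟨b, hb⟩ := hBne
  obtain ⟨g₀, -, hg₀'⟩ := isCompact_univ.exists_isMaxOn ⟨(1 : G), trivial⟩ (hcont a).continuousOn
  have hg₀ : ∀ g : G, f (ρ g⁻¹ a) ≤ f (ρ g₀⁻¹ a) := fun g => hg₀' (Set.mem_univ g)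
  have hFa : F a < α := by
    rw [hFapp]
    have h1 : ∫ g, f (ρ g⁻¹ a) ∂μ ≤ ∫ _ : G, f (ρ g₀⁻¹ a) ∂μ :=
      integral_mono (hint a) (integrable_const _) hg₀
    have h2 : f (ρ g₀⁻¹ a) < α := hfA _ (hAmem g₀⁻¹ ha)
    calc ∫ g, f (ρ g⁻¹ a) ∂μ ≤ f (ρ g₀⁻¹ a) := by simpa using h1
      _ < α := h2
  have hFne : F ≠ 0 := by
    intro h0
    have h1 : F a < F b := lt_of_lt_of_le hFa (hFB b hb)
    rw [h0] at h1
    simp at h1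
  exact ⟨F, hFne, hFinv, α, hFA, hFB⟩
end

section
/- Let C ⊆ X be a nonempty closed convex G-invariant subset and let x₀ ∈ X \ C be a G-invariant point. Then there exists f ∈ X*_G such that f(x₀) > sup_{x ∈ C} f(x). -/
open MeasureTheory

/-- If `C` is a nonempty closed convex `G`-invariant subset and `x₀ ∉ C` is a `G`-invariant
point, then there is a `G`-invariant continuous linear functional `f` with
`f x₀ > sup_{x ∈ C} f x`. -/
theorem group_invariant_strict_separation_point
    {X : Type*} [NormedAddCommGroup X] [NormedSpace ℝ X] [CompleteSpace X]
    {G : Type*} [Group G] [TopologicalSpace G] [IsTopologicalGroup G] [CompactSpace G]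
    (ρ : G →* (X ≃L[ℝ] X))
    (hactcont : Continuous fun p : G × X => ρ p.1 p.2)
    (hnorminv : ∀ (g : G) (x : X), ‖ρ g x‖ = ‖x‖)
    (C : Set X) (hCne : C.Nonempty) (hCclosed : IsClosed C) (hCconv : Convex ℝ C)
    (hCinv : ∀ g : G, (fun x => ρ g x) '' C = C)
    (x₀ : X) (hx₀C : x₀ ∉ C) (hx₀inv : ∀ g : G, ρ g x₀ = x₀) :
    ∃ f : X →L[ℝ] ℝ, (∀ (g : G) (x : X), f (ρ g x) = f x) ∧
      BddAbove (f '' C) ∧ sSup (f '' C) < f x₀ := by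
  classical
  -- separation
  obtain ⟨f₀, u, hfu, hux⟩ := geometric_hahn_banach_closed_point hCconv hCclosed hx₀C
  -- membership invariance
  have hmem : ∀ (g : G) {x : X}, x ∈ C → ρ g x ∈ C := by
    intro g x hx
    have := hCinv g
    rw [← this]
    exact Set.mem_image_of_mem _ hx
  -- set up Haar measure
  letI : MeasurableSpace G := borel G
  haveI : BorelSpace G := ⟨rfl⟩
  haveI : LocallyCompactSpace G := inferInstance
  let μ : Measure G := Measure.haar
  haveI : IsFiniteMeasure μ := CompactSpace.isFiniteMeasure
  have hμpos : 0 < (μ Set.univ).toReal := by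
    have h1 : 0 < μ Set.univ := isOpen_univ.measure_pos μ ⟨1, trivial⟩
    have h2 : μ Set.univ < ⊤ := measure_lt_top μ _
    exact ENNReal.toReal_pos h1.ne' h2.ne
  set m : ℝ := (μ Set.univ).toReal with hm
  -- continuity of integrand
  have hcont : ∀ x : X, Continuous fun g : G => f₀ (ρ g⁻¹ x) := by
    intro x
    exact f₀.continuous.comp (hactcont.comp ((continuous_inv).prodMk continuous_const))
  have hint : ∀ x : X, Integrable (fun g : G => f₀ (ρ g⁻¹ x)) μ := by
    intro x
    exact (hcont x).integrable_of_hasCompactSupport (HasCompactSupport.of_compactSpace _)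
  -- define averaged functional
  let φ : X →ₗ[ℝ] ℝ :=
    { toFun := fun x => ∫ g, f₀ (ρ g⁻¹ x) ∂μ
      map_add' := by
        intro x y
        show (∫ g, f₀ (ρ g⁻¹ (x + y)) ∂μ)
            = (∫ g, f₀ (ρ g⁻¹ x) ∂μ) + ∫ g, f₀ (ρ g⁻¹ y) ∂μ
        have h1 : (fun g : G => f₀ (ρ g⁻¹ (x + y)))
            = fun g => f₀ (ρ g⁻¹ x) + f₀ (ρ g⁻¹ y) := by
          funext g; simp [map_add]
        rw [h1, integral_add (hint x) (hint y)]
      map_smul' := by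
        intro c x
        show (∫ g, f₀ (ρ g⁻¹ (c • x)) ∂μ) = c • ∫ g, f₀ (ρ g⁻¹ x) ∂μ
        have h1 : (fun g : G => f₀ (ρ g⁻¹ (c • x))) = fun g => c * f₀ (ρ g⁻¹ x) := by
          funext g; rw [_root_.map_smul, _root_.map_smul, smul_eq_mul]
        rw [h1, integral_const_mul, smul_eq_mul] }
  have hφbound : ∀ x : X, ‖φ x‖ ≤ (m * ‖f₀‖) * ‖x‖ := by
    intro x
    have : ‖φ x‖ ≤ (‖f₀‖ * ‖x‖) * m := by
      refine (norm_integral_le_of_norm_le_const ?_)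
      filter_upwards with g
      calc ‖f₀ (ρ g⁻¹ x)‖ ≤ ‖f₀‖ * ‖ρ g⁻¹ x‖ := f₀.le_opNorm _
        _ = ‖f₀‖ * ‖x‖ := by rw [hnorminv]
    linarith [this, mul_comm (‖f₀‖ * ‖x‖) m, mul_assoc m ‖f₀‖ ‖x‖]
  let f : X →L[ℝ] ℝ := φ.mkContinuous (m * ‖f₀‖) hφbound
  have hfdef : ∀ x : X, f x = ∫ g, f₀ (ρ g⁻¹ x) ∂μ := fun _ => rfl
  -- invariance
  have hinv : ∀ (g : G) (x : X), f (ρ g x) = f x := by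
    intro h x
    rw [hfdef, hfdef]
    have heq : (fun g : G => f₀ (ρ g⁻¹ (ρ h x)))
        = fun g : G => (fun k : G => f₀ (ρ k⁻¹ x)) (h⁻¹ * g) := by
      funext g
      have h1 : (h⁻¹ * g)⁻¹ = g⁻¹ * h := by group
      have h2 : ρ g⁻¹ (ρ h x) = ρ (g⁻¹ * h) x := by
        rw [map_mul]; rfl
      show f₀ (ρ g⁻¹ (ρ h x)) = f₀ (ρ (h⁻¹ * g)⁻¹ x)
      rw [h1, h2]
    rw [heq, integral_mul_left_eq_self (fun k : G => f₀ (ρ k⁻¹ x)) h⁻¹]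
  -- bound on C
  have hbC : ∀ x ∈ C, f x ≤ m * u := by
    intro x hx
    rw [hfdef]
    have : ∫ g, f₀ (ρ g⁻¹ x) ∂μ ≤ ∫ _, u ∂μ := by
      refine integral_mono (hint x) (integrable_const u) ?_
      intro g
      exact (hfu _ (hmem g⁻¹ hx)).le
    rw [integral_const, smul_eq_mul] at this
    exact this
  have hfx₀ : f x₀ = m * (f₀ x₀) := by
    rw [hfdef]
    have : (fun g : G => f₀ (ρ g⁻¹ x₀)) = fun _ => f₀ x₀ := by
      funext g; rw [hx₀inv]
    rw [this, integral_const, smul_eq_mul]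
    rfl
  refine ⟨f, hinv, ⟨m * u, ?_⟩, ?_⟩
  · rintro y ⟨x, hx, rfl⟩
    exact hbC x hx
  · have h1 : sSup (f '' C) ≤ m * u := by
      apply csSup_le (hCne.image f)
      rintro y ⟨x, hx, rfl⟩
      exact hbC x hx
    have h2 : m * u < m * f₀ x₀ := by
      exact (mul_lt_mul_iff_right₀ hμpos).mpr hux
    rw [hfx₀]
    exact lt_of_le_of_lt h1 h2
end

section
/- Let A, B ⊆ X be nonempty convex G-invariant sets such that A is closed, B is compact and A ∩ B = ∅. Then there exist a nonzero f ∈ X*_G, α ∈ ℝ and ε > 0 such that f(x) ≤ α − ε for every x ∈ A and f(y) ≥ α + ε for every y ∈ B; that is, a G-invariant hyperplane strictly separates A and B. -/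
open MeasureTheory TopologicalSpace

/-- **Second geometric Hahn-Banach form, group invariant version.**
If `A`, `B` are nonempty convex `G`-invariant sets with `A` closed, `B` compact and
`A ∩ B = ∅`, then a `G`-invariant hyperplane strictly separates `A` and `B`. -/
theorem group_invariant_hahn_banach_strict_separation
    {X : Type*} [NormedAddCommGroup X] [NormedSpace ℝ X] [CompleteSpace X]
    {G : Type*} [Group G] [TopologicalSpace G] [IsTopologicalGroup G] [CompactSpace G]
    (ρ : G →* (X ≃L[ℝ] X))
    (hactcont : Continuous fun p : G × X => ρ p.1 p.2)
    (hnorminv : ∀ (g : G) (x : X), ‖ρ g x‖ = ‖x‖)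
    (A B : Set X) (hAne : A.Nonempty) (hBne : B.Nonempty)
    (hAconv : Convex ℝ A) (hBconv : Convex ℝ B)
    (hAinv : ∀ g : G, (fun x => ρ g x) '' A = A)
    (hBinv : ∀ g : G, (fun x => ρ g x) '' B = B)
    (hAclosed : IsClosed A) (hBcompact : IsCompact B) (hAB : A ∩ B = ∅) :
    ∃ f : X →L[ℝ] ℝ, f ≠ 0 ∧ (∀ (g : G) (x : X), f (ρ g x) = f x) ∧
      ∃ α ε : ℝ, 0 < ε ∧ (∀ x ∈ A, f x ≤ α - ε) ∧ (∀ y ∈ B, α + ε ≤ f y) := by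
  letI : MeasurableSpace G := borel G
  haveI : BorelSpace G := ⟨rfl⟩
  haveI : Nonempty G := ⟨1⟩
  set μ : Measure G := Measure.haarMeasure (⊤ : PositiveCompacts G) with hμ
  haveI : IsProbabilityMeasure μ := ⟨by
    have := Measure.haarMeasure_closure_self (K₀ := (⊤ : PositiveCompacts G))
    simpa using this⟩
  obtain ⟨f, u, v, hu, huv, hv⟩ :=
    geometric_hahn_banach_closed_compact hAconv hAclosed hBconv hBcompact
      (Set.disjoint_iff_inter_eq_empty.mpr hAB)
  have hcont : ∀ x : X, Continuous fun g : G => f (ρ g⁻¹ x) := fun x =>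
    f.continuous.comp (hactcont.comp (continuous_inv.prodMk continuous_const))
  have hint : ∀ x : X, Integrable (fun g : G => f (ρ g⁻¹ x)) μ := fun x =>
    (hcont x).integrable_of_hasCompactSupport (HasCompactSupport.of_compactSpace _)
  set Fl : X →ₗ[ℝ] ℝ :=
    { toFun := fun x => ∫ g, f (ρ g⁻¹ x) ∂μ
      map_add' := fun x y => by
        simp only [map_add]
        exact integral_add (hint x) (hint y)
      map_smul' := fun c x => by
        simp only [_root_.map_smul, smul_eq_mul, RingHom.id_apply]
        exact integral_const_mul c fun g => f (ρ g⁻¹ x) } with hFl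
  have hbound : ∀ x : X, ‖Fl x‖ ≤ ‖f‖ * ‖x‖ := by
    intro x
    have : ∀ᵐ g ∂μ, ‖f (ρ g⁻¹ x)‖ ≤ ‖f‖ * ‖x‖ := by
      filter_upwards with g
      calc ‖f (ρ g⁻¹ x)‖ ≤ ‖f‖ * ‖ρ g⁻¹ x‖ := f.le_opNorm _
        _ = ‖f‖ * ‖x‖ := by rw [hnorminv]
    have h := norm_integral_le_of_norm_le_const (μ := μ) this
    rw [probReal_univ, mul_one] at h
    exact h
  set F : X →L[ℝ] ℝ := Fl.mkContinuous (‖f‖) hbound with hF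
  have hFapp : ∀ x : X, F x = ∫ g, f (ρ g⁻¹ x) ∂μ := fun x => rfl
  have hFinv : ∀ (h : G) (x : X), F (ρ h x) = F x := by
    intro h x
    have e1 : (fun g : G => f (ρ g⁻¹ (ρ h x))) = fun g => f (ρ (g⁻¹ * h) x) := by
      funext g
      rw [map_mul]
      rfl
    have key := integral_mul_left_eq_self (μ := μ) (fun g => f (ρ (g⁻¹ * h) x)) h
    have e2 : (fun g : G => f (ρ ((h * g)⁻¹ * h) x)) = fun g => f (ρ g⁻¹ x) := by
      funext g
      congr 1
      congr 1
      group
    rw [hFapp, hFapp, e1, ← key]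
    simp only [e2]
  have hFA : ∀ x ∈ A, F x ≤ u := by
    intro x hx
    have hmem : ∀ g : G, f (ρ g⁻¹ x) ≤ u := by
      intro g
      have : ρ g⁻¹ x ∈ A := by
        rw [← hAinv g⁻¹]
        exact Set.mem_image_of_mem _ hx
      exact (hu _ this).le
    calc F x ≤ ∫ _ : G, u ∂μ := integral_mono (hint x) (integrable_const u) hmem
      _ = u := by simp
  have hFB : ∀ y ∈ B, v ≤ F y := by
    intro y hy
    have hmem : ∀ g : G, v ≤ f (ρ g⁻¹ y) := by
      intro g
      have : ρ g⁻¹ y ∈ B := by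
        rw [← hBinv g⁻¹]
        exact Set.mem_image_of_mem _ hy
      exact (hv _ this).le
    calc v = ∫ _ : G, v ∂μ := by simp
      _ ≤ F y := integral_mono (integrable_const v) (hint y) hmem
  refine ⟨F, ?_, fun g x => hFinv g x, (u + v) / 2, (v - u) / 2, by linarith, ?_, ?_⟩
  · intro h0
    obtain ⟨a, ha⟩ := hAne
    obtain ⟨b, hb⟩ := hBne
    have h1 := hFA a ha
    have h2 := hFB b hb
    rw [h0] at h1 h2
    simp at h1 h2
    linarith
  · intro x hx
    have := hFA x hx
    linarith
  · intro y hy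
    have := hFB y hy
    linarith
end

section
/- Let H ⊆ X be a G-invariant linear subspace whose closure is not all of X, and suppose there exists a G-invariant point x₀ ∈ X not belonging to the closure of H. Then there exists a nonzero f ∈ X*_G such that f(x) = 0 for all x ∈ H. -/
open MeasureTheory

/-- If `H ⊆ X` is a `G`-invariant linear subspace whose closure is not all of `X`, and there
is a `G`-invariant point `x₀` outside the closure of `H`, then there is a nonzero
`G`-invariant continuous linear functional vanishing on `H`. -/
theorem group_invariant_functional_vanishing_on_subspace
    {X : Type*} [NormedAddCommGroup X] [NormedSpace ℝ X] [CompleteSpace X] [Nontrivial X]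
    {G : Type*} [Group G] [TopologicalSpace G] [IsTopologicalGroup G] [CompactSpace G]
    (ρ : G →* (X ≃L[ℝ] X))
    (hactcont : Continuous fun p : G × X => ρ p.1 p.2)
    (hnorminv : ∀ (g : G) (x : X), ‖ρ g x‖ = ‖x‖)
    (H : Submodule ℝ X)
    (hHinv : ∀ g : G, (fun x => ρ g x) '' (H : Set X) = (H : Set X))
    (hHcl : closure (H : Set X) ≠ Set.univ)
    (x₀ : X) (hx₀ : x₀ ∉ closure (H : Set X)) (hx₀inv : ∀ g : G, ρ g x₀ = x₀) :
    ∃ f : X →L[ℝ] ℝ, f ≠ 0 ∧ (∀ (g : G) (x : X), f (ρ g x) = f x) ∧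
      ∀ x ∈ H, f x = 0 := by
  classical
  -- ρ of a product applied
  have hmul : ∀ (a b : G) (y : X), ρ (a * b) y = ρ a (ρ b y) := by
    intro a b y; rw [map_mul]; rfl
  -- Step 1: Hahn-Banach separation
  obtain ⟨f₀, u, hfu, hux₀⟩ :=
    geometric_hahn_banach_closed_point (s := closure (H : Set X))
      (H.topologicalClosure.convex) isClosed_closure hx₀
  have hmemcl : ∀ x ∈ H, (x : X) ∈ closure (H : Set X) := fun x hx => subset_closure hx
  -- f₀ vanishes on H
  have hf₀H : ∀ x ∈ H, f₀ x = 0 := by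
    intro x hx
    by_contra hne
    have hall : ∀ t : ℝ, t * f₀ x < u := by
      intro t
      have := hfu (t • x) (hmemcl _ (H.smul_mem t hx))
      simpa using this
    have h1 := hall ((u + 1) / f₀ x)
    rw [div_mul_cancel₀ _ hne] at h1
    linarith
  have hu0 : 0 < u := by
    have := hfu 0 (hmemcl 0 H.zero_mem)
    simpa using this
  have hf₀x₀ : 0 < f₀ x₀ := lt_trans hu0 hux₀
  -- Step 2: Haar measure on G
  borelize G
  haveI : LocallyCompactSpace G := inferInstance
  set μ : Measure G := Measure.haar with hμ
  -- continuity of g ↦ f₀ (ρ g⁻¹ y)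
  have hcont : ∀ y : X, Continuous fun g : G => f₀ (ρ g⁻¹ y) := by
    intro y
    exact f₀.continuous.comp
      (hactcont.comp ((continuous_inv).prodMk continuous_const))
  have hint : ∀ y : X, Integrable (fun g : G => f₀ (ρ g⁻¹ y)) μ :=
    fun y => (hcont y).integrable_of_hasCompactSupport (HasCompactSupport.of_compactSpace _)
  -- the averaged linear map
  set Fl : X →ₗ[ℝ] ℝ :=
    { toFun := fun y => ∫ g, f₀ (ρ g⁻¹ y) ∂μ
      map_add' := by
        intro y z
        simp only [map_add]
        exact integral_add (hint y) (hint z)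
      map_smul' := by
        intro c y
        have heq : ∀ g : G, f₀ (ρ g⁻¹ (c • y)) = c * f₀ (ρ g⁻¹ y) := by
          intro g
          rw [(ρ g⁻¹).map_smul, f₀.map_smul, smul_eq_mul]
        simp only [RingHom.id_apply, smul_eq_mul, heq]
        exact integral_const_mul c _ } with hFl
  have hFlbound : ∀ y : X, ‖Fl y‖ ≤ (μ Set.univ).toReal * ‖f₀‖ * ‖y‖ := by
    intro y
    have h1 : ‖Fl y‖ ≤ ∫ g, ‖f₀ (ρ g⁻¹ y)‖ ∂μ := norm_integral_le_integral_norm _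
    have h2 : ∫ g, ‖f₀ (ρ g⁻¹ y)‖ ∂μ ≤ ∫ _ : G, ‖f₀‖ * ‖y‖ ∂μ := by
      apply integral_mono (hint y).norm (integrable_const _)
      intro g
      calc ‖f₀ (ρ g⁻¹ y)‖ ≤ ‖f₀‖ * ‖ρ g⁻¹ y‖ := f₀.le_opNorm _
        _ = ‖f₀‖ * ‖y‖ := by rw [hnorminv]
    have h3 : ∫ _ : G, ‖f₀‖ * ‖y‖ ∂μ = (μ Set.univ).toReal * (‖f₀‖ * ‖y‖) := by
      simp [integral_const, smul_eq_mul, Measure.real]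
    calc ‖Fl y‖ ≤ ∫ _ : G, ‖f₀‖ * ‖y‖ ∂μ := le_trans h1 h2
      _ = (μ Set.univ).toReal * ‖f₀‖ * ‖y‖ := by rw [h3]; ring
  set f : X →L[ℝ] ℝ := Fl.mkContinuous ((μ Set.univ).toReal * ‖f₀‖) hFlbound with hf
  have hfapp : ∀ y : X, f y = ∫ g, f₀ (ρ g⁻¹ y) ∂μ := fun y => rfl
  -- value at x₀
  have hμuniv : 0 < (μ Set.univ).toReal := by
    refine ENNReal.toReal_pos ?_ (measure_ne_top μ _)
    exact (μ.measure_pos_of_nonempty_interior (by simp)).ne'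
  have hfx₀ : f x₀ = (μ Set.univ).toReal * f₀ x₀ := by
    rw [hfapp]
    have : (fun g : G => f₀ (ρ g⁻¹ x₀)) = fun _ : G => f₀ x₀ := by
      funext g; rw [hx₀inv]
    rw [this, integral_const, smul_eq_mul, Measure.real]
  refine ⟨f, ?_, ?_, ?_⟩
  · intro hzero
    have : f x₀ = 0 := by rw [hzero]; rfl
    rw [hfx₀] at this
    nlinarith
  · -- invariance
    intro g₀ x
    have key := integral_mul_left_eq_self (μ := μ) (fun g : G => f₀ (ρ g⁻¹ (ρ g₀ x))) g₀
    have heq : (fun g : G => f₀ (ρ (g₀ * g)⁻¹ (ρ g₀ x))) = fun g : G => f₀ (ρ g⁻¹ x) := by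
      funext g
      rw [mul_inv_rev, hmul, ← hmul g₀⁻¹ g₀, inv_mul_cancel, map_one]
      rfl
    rw [hfapp, hfapp, ← key, heq]
  · -- vanishing on H
    intro x hx
    rw [hfapp]
    have : (fun g : G => f₀ (ρ g⁻¹ x)) = fun _ : G => (0 : ℝ) := by
      funext g
      have hmem : ρ g⁻¹ x ∈ (H : Set X) := by
        rw [← hHinv g⁻¹]
        exact Set.mem_image_of_mem _ hx
      exact hf₀H _ hmem
    rw [this, integral_zero]
end

section
/- Let φ : X → ℝ ∪ {+∞} be proper, lower semicontinuous, bounded below, G-invariant, and convex with respect to G. Then for every ε > 0 and δ > 0 there exists a G-invariant point x̃ ∈ X such that φ(x̃) < φ(x) + ε‖x − x̃‖ for all x ∈ X with x ≠ x̃. Moreover, if x₀ ∈ X satisfies φ(x₀) < inf_{x ∈ X} φ(x) + δ, then x̃ can additionally be chosen so that ‖x̄₀ − x̃‖ ≤ δ/ε, where x̄₀ is the symmetrization of x₀. -/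
open MeasureTheory

open Filter in
lemma ekeland_real {Y : Type*} [MetricSpace Y] [CompleteSpace Y]
    {f : Y → ℝ} (hlsc : LowerSemicontinuous f) {b : ℝ} (hb : ∀ y, b ≤ f y)
    {ε : ℝ} (hε : 0 < ε) (x₀ : Y) :
    ∃ xt : Y, (f xt + ε * dist xt x₀ ≤ f x₀) ∧
      ∀ x : Y, f x + ε * dist x xt ≤ f xt → x = xt := by
  set S : Y → Set Y := fun x => {y | f y + ε * dist y x ≤ f x} with hS
  have hxS : ∀ x, x ∈ S x := by intro x; simp [hS]
  have hbddS : ∀ x, BddBelow (f '' S x) := fun x => ⟨b, by rintro r ⟨y, -, rfl⟩; exact hb y⟩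
  set m : Y → ℝ := fun x => sInf (f '' S x) with hm
  have hm_le : ∀ x, m x ≤ f x := fun x => csInf_le (hbddS x) ⟨x, hxS x, rfl⟩
  have hstep : ∀ x, ∃ y, y ∈ S x ∧ f y ≤ (f x + m x) / 2 := by
    intro x
    rcases eq_or_lt_of_le (hm_le x) with h | h
    · exact ⟨x, hxS x, by rw [← h]; linarith⟩
    · obtain ⟨r, ⟨y, hy, rfl⟩, hr⟩ := exists_lt_of_csInf_lt
        ⟨f x, Set.mem_image_of_mem f (hxS x)⟩ (show m x < (f x + m x) / 2 by linarith)
      exact ⟨y, hy, hr.le⟩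
  choose step hstepS hstepf using hstep
  set u : ℕ → Y := fun n => step^[n] x₀ with hu
  have hu0 : u 0 = x₀ := rfl
  have husucc : ∀ n, u (n + 1) = step (u n) := fun n => Function.iterate_succ_apply' _ _ _
  have h1 : ∀ n, u (n + 1) ∈ S (u n) := fun n => (husucc n) ▸ hstepS (u n)
  have h2 : ∀ n, f (u (n + 1)) ≤ (f (u n) + m (u n)) / 2 := fun n => (husucc n) ▸ hstepf (u n)
  have htrans : ∀ x y z, y ∈ S x → z ∈ S y → z ∈ S x := by
    intro x y z hy hz
    simp only [hS, Set.mem_setOf_eq] at *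
    have := dist_triangle z y x
    nlinarith [hε.le]
  have hchain : ∀ n k, u (n + k) ∈ S (u n) := by
    intro n k
    induction k with
    | zero => exact hxS (u n)
    | succ k ih => exact htrans _ _ _ ih (h1 (n + k))
  have hchain' : ∀ n k, n ≤ k → u k ∈ S (u n) := by
    intro n k hnk; obtain ⟨j, rfl⟩ := Nat.exists_eq_add_of_le hnk; exact hchain n j
  have hfanti : Antitone (fun n => f (u n)) := by
    intro n k hnk
    have := hchain' n k hnk
    simp only [hS, Set.mem_setOf_eq] at this
    nlinarith [dist_nonneg (x := u k) (y := u n), hε.le]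
  have hbddrange : BddBelow (Set.range fun n => f (u n)) := ⟨b, by rintro r ⟨n, rfl⟩; exact hb _⟩
  set L := ⨅ n, f (u n) with hL
  have hLle : ∀ n, L ≤ f (u n) := fun n => ciInf_le hbddrange n
  have htendsto : Tendsto (fun n => f (u n)) atTop (nhds L) := tendsto_atTop_ciInf hfanti hbddrange
  -- Cauchy
  have hdistb : ∀ n k, n ≤ k → dist (u k) (u n) ≤ (f (u n) - L) / ε := by
    intro n k hnk
    have := hchain' n k hnk
    simp only [hS, Set.mem_setOf_eq] at this
    rw [le_div_iff₀ hε]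
    nlinarith [hLle k]
  have hcauchy : CauchySeq u := by
    apply cauchySeq_of_le_tendsto_0 (fun N => 2 * (f (u N) - L) / ε)
    · intro n k N hn hk
      calc dist (u n) (u k) ≤ dist (u n) (u N) + dist (u N) (u k) := dist_triangle _ _ _
        _ ≤ (f (u N) - L) / ε + (f (u N) - L) / ε := by
            rw [dist_comm (u N) (u k)]; exact add_le_add (hdistb N n hn) (hdistb N k hk)
        _ = 2 * (f (u N) - L) / ε := by ring
    · have : Tendsto (fun N => 2 * (f (u N) - L) / ε) atTop (nhds (2 * (L - L) / ε)) := by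
        exact (((htendsto.sub tendsto_const_nhds).const_mul 2).div_const ε)
      simpa using this
  obtain ⟨xt, hxt⟩ := cauchySeq_tendsto_of_complete hcauchy
  -- xt ∈ S (u n) for all n
  have h5 : ∀ n, f xt + ε * dist xt (u n) ≤ f (u n) := by
    intro n
    by_contra hc
    push_neg at hc
    have hg : LowerSemicontinuous fun y => f y + ε * dist y (u n) :=
      hlsc.add ((continuous_const.mul (continuous_id.dist continuous_const)).lowerSemicontinuous)
    have hev := hg xt (f (u n)) hc
    obtain ⟨k, hk1, hk2⟩ := ((hxt.eventually hev).and (eventually_ge_atTop n)).exists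
    have hk1' : f (u n) < f (u k) + ε * dist (u k) (u n) := hk1
    have := hchain' n k hk2
    simp only [hS, Set.mem_setOf_eq] at this
    linarith
  have hfxtL : f xt ≤ L := le_ciInf fun n => by nlinarith [h5 n, dist_nonneg (x := xt) (y := u n), hε.le]
  refine ⟨xt, by simpa [hu0] using h5 0, ?_⟩
  intro x hx
  have hxSn : ∀ n, x ∈ S (u n) := by
    intro n
    simp only [hS, Set.mem_setOf_eq]
    have := h5 n
    have htri := dist_triangle x xt (u n)
    nlinarith [hε.le]
  have hmn : ∀ n, m (u n) ≤ f x := fun n => csInf_le (hbddS _) ⟨x, hxSn n, rfl⟩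
  have hLfx : L ≤ f x := by
    have hseq : ∀ n, f (u (n + 1)) ≤ (f (u n) + f x) / 2 := fun n => le_trans (h2 n) (by linarith [hmn n])
    have h01 : Tendsto (fun n => f (u (n + 1))) atTop (nhds L) := htendsto.comp (tendsto_add_atTop_nat 1)
    have h02 : Tendsto (fun n => (f (u n) + f x) / 2) atTop (nhds ((L + f x) / 2)) :=
      (htendsto.add tendsto_const_nhds).div_const 2
    have := le_of_tendsto_of_tendsto' h01 h02 hseq
    linarith
  have : dist x xt ≤ 0 := by nlinarith [hfxtL]
  exact eq_of_dist_eq_zero (le_antisymm this dist_nonneg)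

lemma ekeland_ereal {Y : Type*} [MetricSpace Y] [CompleteSpace Y]
    {φ : Y → EReal} (hlsc : LowerSemicontinuous φ) {b : ℝ} (hb : ∀ y, (b : EReal) ≤ φ y)
    {ε δ : ℝ} (hε : 0 < ε) (x₀ : Y) (hfin : φ x₀ ≠ ⊤)
    (hδ : ∀ y, φ x₀ < φ y + (δ : EReal)) :
    ∃ xt : Y, φ xt ≠ ⊤ ∧
      (∀ x : Y, x ≠ xt → φ xt < φ x + ((ε * dist x xt : ℝ) : EReal)) ∧
      dist x₀ xt ≤ δ / ε := by
  have hbot : ∀ y, φ y ≠ ⊥ := fun y => ((EReal.bot_lt_coe b).trans_le (hb y)).ne'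
  have hδpos : 0 < δ := by
    have h := hδ x₀
    by_contra hc
    push_neg at hc
    have h2 : φ x₀ + (δ : EReal) ≤ φ x₀ + ((0 : ℝ) : EReal) :=
      add_le_add_right (by exact_mod_cast hc) _
    rw [show ((0:ℝ) : EReal) = (0 : EReal) by norm_cast, add_zero] at h2
    exact absurd (h.trans_le h2) (lt_irrefl _)
  set M : ℝ := (φ x₀).toReal + 1 with hM
  have hx₀coe : ((φ x₀).toReal : EReal) = φ x₀ := EReal.coe_toReal hfin (hbot x₀)
  have hx₀M : φ x₀ < (M : EReal) := by
    rw [← hx₀coe, hM]; exact_mod_cast lt_add_one _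
  set f : Y → ℝ := fun y => (min (φ y) (M : EReal)).toReal with hf
  have hne_top : ∀ y, min (φ y) (M : EReal) ≠ ⊤ :=
    fun y => ((min_le_right _ _).trans_lt (EReal.coe_lt_top M)).ne
  have hne_bot : ∀ y, min (φ y) (M : EReal) ≠ ⊥ := by
    intro y
    have h1 : ((min b M : ℝ) : EReal) ≤ φ y :=
      le_trans (by exact_mod_cast min_le_left b M) (hb y)
    have h2 : ((min b M : ℝ) : EReal) ≤ (M : EReal) := by exact_mod_cast min_le_right b M
    exact ((EReal.bot_lt_coe _).trans_le (le_min h1 h2)).ne'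
  have hcoe_f : ∀ y, (f y : EReal) = min (φ y) (M : EReal) :=
    fun y => EReal.coe_toReal (hne_top y) (hne_bot y)
  have hf_le : ∀ y, (f y : EReal) ≤ φ y := fun y => (hcoe_f y).le.trans (min_le_left _ _)
  have hf_lb : ∀ y, min b M ≤ f y := by
    intro y
    have h1 : ((min b M : ℝ) : EReal) ≤ φ y :=
      le_trans (by exact_mod_cast min_le_left b M) (hb y)
    have h2 : ((min b M : ℝ) : EReal) ≤ (M : EReal) := by exact_mod_cast min_le_right b M
    have := (le_min h1 h2).trans (hcoe_f y).ge
    exact_mod_cast this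
  have hfx₀ : (f x₀ : EReal) = φ x₀ := by rw [hcoe_f x₀, min_eq_left hx₀M.le]
  have hfx₀M : f x₀ < M := by
    have : (f x₀ : EReal) < (M : EReal) := hfx₀ ▸ hx₀M
    exact_mod_cast this
  have hflsc : LowerSemicontinuous f := by
    intro y c hc
    have hc' : (c : EReal) < min (φ y) (M : EReal) := by
      rw [← hcoe_f y]; exact_mod_cast hc
    have hcM : (c : EReal) < (M : EReal) := hc'.trans_le (min_le_right _ _)
    filter_upwards [hlsc y c (hc'.trans_le (min_le_left _ _))] with z hz
    have : (c : EReal) < (f z : EReal) := by rw [hcoe_f z]; exact lt_min hz hcM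
    exact_mod_cast this
  have hδf : ∀ y, f x₀ < f y + δ := by
    intro y
    rcases le_or_gt (M : EReal) (φ y) with h | h
    · have : f y = M := by
        have : (f y : EReal) = (M : EReal) := by rw [hcoe_f y, min_eq_right h]
        exact_mod_cast this
      rw [this]; linarith
    · have hymin : (f y : EReal) = φ y := by rw [hcoe_f y, min_eq_left h.le]
      have := hδ y
      rw [← hfx₀, ← hymin] at this
      have : ((f x₀ : ℝ) : EReal) < ((f y + δ : ℝ) : EReal) := by
        rw [EReal.coe_add]; exact this
      exact_mod_cast this
  obtain ⟨xt, hxt1, hxt2⟩ := ekeland_real hflsc hf_lb hε x₀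
  have hfxt : f xt ≤ f x₀ := by nlinarith [dist_nonneg (x := xt) (y := x₀), hε.le]
  have hxtcoe : (f xt : EReal) = φ xt := by
    have h1 : f xt < M := lt_of_le_of_lt hfxt hfx₀M
    have h2 : min (φ xt) (M : EReal) < (M : EReal) := by
      rw [← hcoe_f xt]; exact_mod_cast h1
    have h3 : φ xt < (M : EReal) := by
      by_contra hcon
      push_neg at hcon
      rw [min_eq_right hcon] at h2
      exact lt_irrefl _ h2
    rw [hcoe_f xt, min_eq_left h3.le]
  refine ⟨xt, by rw [← hxtcoe]; exact EReal.coe_ne_top _, ?_, ?_⟩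
  · intro x hx
    have hlt : f xt < f x + ε * dist x xt := by
      by_contra hcon
      push_neg at hcon
      exact hx (hxt2 x hcon)
    calc φ xt = ((f xt : ℝ) : EReal) := hxtcoe.symm
      _ < ((f x + ε * dist x xt : ℝ) : EReal) := by exact_mod_cast hlt
      _ = ((f x : ℝ) : EReal) + ((ε * dist x xt : ℝ) : EReal) := by rw [EReal.coe_add]
      _ ≤ φ x + ((ε * dist x xt : ℝ) : EReal) := add_le_add_left (hf_le x) _
  · have h1 : ε * dist xt x₀ ≤ f x₀ - f xt := by linarith
    have h2 := hδf xt
    rw [dist_comm, le_div_iff₀ hε]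
    nlinarith



/-- **Group invariant Ekeland variational principle.**
`φ : X → ℝ ∪ {+∞}` proper, lower semicontinuous, bounded below, `G`-invariant and convex
with respect to `G` (i.e. `φ x̄ ≤ φ x` where `x̄ = ∫_G g x dμ g` is the symmetrization).
Then for all `ε, δ > 0` there is a `G`-invariant point `xt` with
`φ xt < φ x + ε‖x - xt‖` for all `x ≠ xt`; moreover if `φ x₀ < inf φ + δ` then `xt` can be
chosen with `‖x̄₀ - xt‖ ≤ δ / ε`. -/
theorem group_invariant_ekeland_variational_principle
    {X : Type*} [NormedAddCommGroup X] [NormedSpace ℝ X] [CompleteSpace X]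
    {G : Type*} [Group G] [TopologicalSpace G] [IsTopologicalGroup G] [CompactSpace G]
    {mG : MeasurableSpace G} [BorelSpace G]
    (μ : Measure G) [μ.IsHaarMeasure] [IsProbabilityMeasure μ]
    (ρ : G →* (X ≃L[ℝ] X))
    (hactcont : Continuous fun p : G × X => ρ p.1 p.2)
    (hnorminv : ∀ (g : G) (x : X), ‖ρ g x‖ = ‖x‖)
    (φ : X → EReal)
    (hne_bot : ∀ x, φ x ≠ ⊥) (hproper : ∃ x, φ x ≠ ⊤)
    (hlsc : LowerSemicontinuous φ)
    (hbdd : ∃ b : ℝ, ∀ x, (b : EReal) ≤ φ x)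
    (hGinv : ∀ (g : G) (x : X), φ (ρ g x) = φ x)
    (hconv : ∀ x : X, φ (∫ g, ρ g x ∂μ) ≤ φ x) :
    (∀ ε > (0 : ℝ), ∀ _δ > (0 : ℝ), ∃ xt : X, (∀ g : G, ρ g xt = xt) ∧
        ∀ x : X, x ≠ xt → φ xt < φ x + ((ε * ‖x - xt‖ : ℝ) : EReal)) ∧
    (∀ ε > (0 : ℝ), ∀ δ > (0 : ℝ), ∀ x₀ : X, φ x₀ < (⨅ x, φ x) + (δ : EReal) →
        ∃ xt : X, (∀ g : G, ρ g xt = xt) ∧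
          (∀ x : X, x ≠ xt → φ xt < φ x + ((ε * ‖x - xt‖ : ℝ) : EReal)) ∧
          ‖(∫ g, ρ g x₀ ∂μ) - xt‖ ≤ δ / ε) := by
  obtain ⟨b, hb⟩ := hbdd
  -- basic facts about the symmetrization
  have hcontx : ∀ x : X, Continuous fun g : G => ρ g x := fun x =>
    hactcont.comp (continuous_id.prodMk continuous_const)
  have hint : ∀ x : X, Integrable (fun g : G => ρ g x) μ := fun x =>
    (hcontx x).integrable_of_hasCompactSupport (HasCompactSupport.of_compactSpace _)
  set bar : X → X := fun x => ∫ g, ρ g x ∂μ with hbar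
  have hbar_inv : ∀ (h : G) (x : X), ρ h (bar x) = bar x := by
    intro h x
    have e1 : ρ h (bar x) = ∫ g, ρ h (ρ g x) ∂μ := by
      exact (((ρ h : X ≃L[ℝ] X) : X →L[ℝ] X).integral_comp_comm (hint x)).symm
    have e2 : (fun g : G => ρ h (ρ g x)) = fun g : G => ρ (h * g) x := by
      funext g; rw [map_mul]; rfl
    rw [e1, e2]
    exact integral_mul_left_eq_self (fun g : G => ρ g x) h
  have hbar_fixed : ∀ x : X, (∀ g : G, ρ g x = x) → bar x = x := by
    intro x hx
    have : (fun g : G => ρ g x) = fun _ : G => x := funext hx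
    rw [hbar]; simp only [this, integral_const, measure_univ, ENNReal.toReal_one, one_smul, probReal_univ]
  have hbar_norm : ∀ x : X, ‖bar x‖ ≤ ‖x‖ := by
    intro x
    calc ‖bar x‖ ≤ ∫ g, ‖ρ g x‖ ∂μ := norm_integral_le_integral_norm _
      _ = ‖x‖ := by
          simp only [hnorminv]
          simp [integral_const, measure_univ]
  have hbar_sub : ∀ x y : X, bar x - bar y = bar (x - y) := by
    intro x y
    rw [hbar]
    simp only
    rw [← integral_sub (hint x) (hint y)]
    congr 1
    funext g
    rw [map_sub]
  -- the closed set of invariant points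
  have hFclosed : IsClosed {x : X | ∀ g : G, ρ g x = x} := by
    have he : {x : X | ∀ g : G, ρ g x = x} = ⋂ g : G, {x : X | ρ g x = x} := by
      ext x; simp
    rw [he]
    refine isClosed_iInter fun g => isClosed_eq ?_ continuous_id
    exact hactcont.comp (continuous_const.prodMk continuous_id)
  haveI : CompleteSpace {x : X // ∀ g : G, ρ g x = x} := by
    have : CompleteSpace ({x : X | ∀ g : G, ρ g x = x} : Set X) := hFclosed.completeSpace_coe
    exact this
  have hlscF : LowerSemicontinuous fun y : {x : X // ∀ g : G, ρ g x = x} => φ y.val := by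
    intro y c hc
    exact (continuous_subtype_val.tendsto y).eventually (hlsc y.val c hc)
  -- the key quantitative statement
  have key : ∀ ε > (0 : ℝ), ∀ δ > (0 : ℝ), ∀ x₀ : X, φ x₀ < (⨅ x, φ x) + (δ : EReal) →
      ∃ xt : X, (∀ g : G, ρ g xt = xt) ∧
        (∀ x : X, x ≠ xt → φ xt < φ x + ((ε * ‖x - xt‖ : ℝ) : EReal)) ∧
        ‖bar x₀ - xt‖ ≤ δ / ε := by
    intro ε hε δ hδ x₀ h₀
    have hx₀top : φ x₀ ≠ ⊤ := by
      intro h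
      have h2 : φ x₀ < φ x₀ + (δ : EReal) :=
        h₀.trans_le (add_le_add_left (iInf_le _ x₀) _)
      rw [h, EReal.top_add_coe] at h2
      exact lt_irrefl _ h2
    set x₁ : {x : X // ∀ g : G, ρ g x = x} := ⟨bar x₀, fun g => hbar_inv g x₀⟩ with hx₁
    have hφx₁ : φ (bar x₀) ≤ φ x₀ := hconv x₀
    have hx₁top : φ x₁.val ≠ ⊤ := fun h => hx₀top (top_le_iff.1 (h ▸ hφx₁))
    have hδ' : ∀ y : {x : X // ∀ g : G, ρ g x = x},
        φ x₁.val < φ y.val + (δ : EReal) :=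
      fun y => lt_of_le_of_lt hφx₁ (h₀.trans_le (add_le_add_left (iInf_le _ y.val) _))
    obtain ⟨xt, hxttop, hxtmain, hxtdist⟩ :=
      ekeland_ereal hlscF (fun y => hb y.val) hε x₁ hx₁top hδ'
    refine ⟨xt.val, xt.2, ?_, ?_⟩
    · intro x hx
      have hbarle : ‖bar x - xt.val‖ ≤ ‖x - xt.val‖ := by
        calc ‖bar x - xt.val‖ = ‖bar x - bar xt.val‖ := by rw [hbar_fixed xt.val xt.2]
          _ = ‖bar (x - xt.val)‖ := by rw [hbar_sub]
          _ ≤ ‖x - xt.val‖ := hbar_norm _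
      by_cases hbx : bar x = xt.val
      · rcases eq_or_ne (φ x) ⊤ with h | h
        · rw [h, EReal.top_add_coe]
          exact lt_top_iff_ne_top.2 hxttop
        · have h1 : φ xt.val ≤ φ x := hbx ▸ hconv x
          have hpos : (0 : ℝ) < ε * ‖x - xt.val‖ :=
            mul_pos hε (norm_pos_iff.2 (sub_ne_zero.2 hx))
          have h2 : φ x < φ x + ((ε * ‖x - xt.val‖ : ℝ) : EReal) := by
            set r := (φ x).toReal with hr
            have hcoe : ((r : ℝ) : EReal) = φ x := EReal.coe_toReal h (hne_bot x)
            rw [← hcoe, ← EReal.coe_add]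
            exact_mod_cast (by linarith : r < r + ε * ‖x - xt.val‖)
          exact lt_of_le_of_lt h1 h2
      · have hmemne : (⟨bar x, fun g => hbar_inv g x⟩ : {x : X // ∀ g : G, ρ g x = x}) ≠ xt :=
          fun h => hbx (congrArg Subtype.val h)
        have hmain := hxtmain _ hmemne
        have hdist : dist (⟨bar x, fun g => hbar_inv g x⟩ : {x : X // ∀ g : G, ρ g x = x}) xt
            = ‖bar x - xt.val‖ := by
          rw [Subtype.dist_eq, dist_eq_norm]
        rw [hdist] at hmain
        refine hmain.trans_le ?_
        refine add_le_add (hconv x) ?_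
        exact_mod_cast mul_le_mul_of_nonneg_left hbarle hε.le
    · have : dist x₁ xt = ‖bar x₀ - xt.val‖ := by rw [Subtype.dist_eq, dist_eq_norm]
      rw [← this]
      exact hxtdist
  refine ⟨?_, fun ε hε δ hδ x₀ h₀ => (key ε hε δ hδ x₀ h₀).imp
    fun xt ⟨h1, h2, h3⟩ => ⟨h1, h2, h3⟩⟩
  intro ε hε _δ h_δ
  obtain ⟨x, hx⟩ := hproper
  set I : EReal := ⨅ y, φ y with hI
  have hIbot : (b : EReal) ≤ I := le_iInf hb
  have hItop : I ≠ ⊤ := fun h => hx (top_le_iff.1 (h ▸ iInf_le _ x))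
  have hIbot' : I ≠ ⊥ := ((EReal.bot_lt_coe b).trans_le hIbot).ne'
  set δ₀ : ℝ := (φ x).toReal - I.toReal + 1 with hδ₀def
  have hδ₀pos : 0 < δ₀ := by
    have := EReal.toReal_le_toReal (iInf_le _ x : I ≤ φ x) hIbot' hx
    rw [hδ₀def]; linarith
  have hlt : φ x < I + (δ₀ : EReal) := by
    rw [← EReal.coe_toReal hItop hIbot', ← EReal.coe_add,
      ← EReal.coe_toReal hx (hne_bot x)]
    exact_mod_cast (by rw [hδ₀def]; linarith : (φ x).toReal < I.toReal + δ₀)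
  obtain ⟨xt, h1, h2, _⟩ := key ε hε δ₀ hδ₀pos x hlt
  exact ⟨xt, h1, h2⟩
end

section
/- Let f : ℝ → ℝ be defined by f(x) = 2x + 1 for −1/2 ≤ x ≤ 0, f(x) = −2x + 1 for 0 ≤ x ≤ 1/2, and f(x) = 0 otherwise. Then f is continuous, bounded below, and invariant under the group G = {id, −id} acting on ℝ (i.e., f(−x) = f(x) for all x), the only G-invariant point of ℝ is 0, and for every ε with 0 < ε < 1 one has f(0) ≥ f(1/2) + ε·(1/2); consequently there is no G-invariant point x̃ ∈ ℝ satisfying f(x̃) < f(x) + ε|x − x̃| for all x ≠ x̃, so the conclusion of the G-invariant Ekeland variational principle fails for f. -/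
/-- **Failure of the group invariant Ekeland variational principle without convexity
with respect to the group.**
For `G = {id, -id}` acting on `ℝ` and the tent function `f`, `f` is continuous, bounded
below and `G`-invariant, `0` is the only `G`-invariant point, and for every `0 < ε < 1`
one has `f 0 ≥ f (1/2) + ε/2`; consequently no `G`-invariant point `xt` satisfies
`f xt < f x + ε|x - xt|` for all `x ≠ xt`. -/
theorem ekeland_fails_without_group_convexity
    (f : ℝ → ℝ)
    (hf : ∀ x : ℝ, f x =
      if -(1 / 2 : ℝ) ≤ x ∧ x ≤ 0 then 2 * x + 1
      else if 0 ≤ x ∧ x ≤ (1 / 2 : ℝ) then -2 * x + 1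
      else 0) :
    Continuous f ∧ BddBelow (Set.range f) ∧
    (∀ x : ℝ, f (-x) = f x) ∧
    (∀ x : ℝ, (-x = x) ↔ x = 0) ∧
    (∀ ε : ℝ, 0 < ε → ε < 1 → f 0 ≥ f (1 / 2) + ε * (1 / 2)) ∧
    (∀ ε : ℝ, 0 < ε → ε < 1 →
      ¬ ∃ xt : ℝ, (-xt = xt) ∧ ∀ x : ℝ, x ≠ xt → f xt < f x + ε * |x - xt|) := by
  have hfe : f = fun x => max (1 - 2 * |x|) 0 := by
    funext x
    rw [hf x]
    rcases abs_cases x with ⟨ha, hx⟩ | ⟨ha, hx⟩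
    · split_ifs with h1 h2
      · have hx0 : x = 0 := le_antisymm h1.2 hx
        subst hx0; simp
      · rw [ha, max_eq_left] <;> nlinarith [h2.2, h2.1]
      · rw [ha, max_eq_right]
        push_neg at h1 h2
        rcases le_or_gt x (1/2) with h | h
        · linarith [h2 hx]
        · linarith
    · split_ifs with h1 h2
      · rw [ha, max_eq_left] <;> nlinarith [h1.1, h1.2]
      · nlinarith
      · rw [ha, max_eq_right]
        push_neg at h1
        rcases le_or_gt (-(1/2) : ℝ) x with h | h
        · linarith [h1 h]
        · linarith
  have hcont : Continuous f := by
    rw [hfe]; fun_prop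
  have h0 : f 0 = 1 := by rw [hfe]; norm_num
  have hhalf : f (1/2) = 0 := by rw [hfe]; norm_num [abs_of_pos]
  refine ⟨hcont, ⟨0, ?_⟩, ?_, ?_, ?_, ?_⟩
  · rintro y ⟨x, rfl⟩
    rw [hfe]; exact le_max_right _ _
  · intro x; rw [hfe]; simp [abs_neg]
  · intro x; constructor <;> intro h <;> linarith
  · intro ε hε hε1; rw [h0, hhalf]; linarith
  · rintro ε hε hε1 ⟨xt, hxt, hall⟩
    have : xt = 0 := by linarith
    subst this
    have := hall (1/2) (by norm_num)
    rw [h0, hhalf] at this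
    rw [show |(1:ℝ)/2 - 0| = 1/2 by rw [sub_zero]; exact abs_of_pos (by norm_num)] at this
    nlinarith
end

section
/- Let φ : X → ℝ be lower semicontinuous, Gâteaux differentiable, bounded below, G-invariant and convex with respect to G. Then there exists a sequence {x_n}_{n=1}^∞ ⊆ X such that (1) x_n is G-invariant for all n, (2) φ(x_n) → inf_{x ∈ X} φ(x), and (3) ‖δφ(x_n)‖ → 0, where δφ(x_n) ∈ X* is the Gâteaux derivative of φ at x_n. -/
open MeasureTheory Filter Topology

theorem ekeland_weak {Y : Type*} [MetricSpace Y] [CompleteSpace Y] [Nonempty Y]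
    (f : Y → ℝ) (hlsc : LowerSemicontinuous f) (hbdd : BddBelow (Set.range f))
    {ε : ℝ} (hε : 0 < ε) :
    ∃ x : Y, f x ≤ (⨅ y, f y) + ε ∧ ∀ y, f x ≤ f y + ε * dist x y := by
  set S : Y → Set Y := fun x => {y | f y + ε * dist x y ≤ f x} with hS
  have hmemS : ∀ x, x ∈ S x := by intro x; simp [hS]
  have hStrans : ∀ x y z, y ∈ S x → z ∈ S y → z ∈ S x := by
    intro x y z hy hz
    simp only [hS, Set.mem_setOf_eq] at *
    have := dist_triangle x y z
    nlinarith
  have hSne : ∀ x, (f '' S x).Nonempty := fun x => ⟨f x, x, hmemS x, rfl⟩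
  have hSbdd : ∀ x, BddBelow (f '' S x) := fun x =>
    hbdd.mono (Set.image_subset_range _ _)
  have hSclosed : ∀ x, IsClosed (S x) := by
    intro x
    have hl : LowerSemicontinuous fun y => f y + ε * dist x y :=
      hlsc.add ((continuous_const.mul (continuous_const.dist continuous_id)).lowerSemicontinuous)
    have ho := hl.isOpen_preimage (f x)
    have he : S x = ((fun y => f y + ε * dist x y) ⁻¹' Set.Ioi (f x))ᶜ := by
      ext y; simp [hS, not_lt]
    rw [he]; exact ho.isClosed_compl
  obtain ⟨x₀, hx₀⟩ : ∃ x₀ : Y, f x₀ < (⨅ y, f y) + ε :=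
    exists_lt_of_ciInf_lt (lt_add_of_pos_right (⨅ y, f y) hε)
  have hchoice : ∀ n : ℕ, ∀ x : Y, ∃ x' : Y, x' ∈ S x ∧
      f x' ≤ sInf (f '' S x) + (1/2)^n := by
    intro n x
    obtain ⟨v, ⟨x', hx', rfl⟩, hv⟩ := Real.lt_sInf_add_pos (hSne x)
      (by positivity : (0:ℝ) < (1/2)^n)
    exact ⟨x', hx', hv.le⟩
  -- the recursive sequence
  let x : ℕ → Y := fun n => Nat.rec x₀ (fun n xn => (hchoice n xn).choose) n
  have hxsucc : ∀ n : ℕ, x (n+1) ∈ S (x n) ∧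
      f (x (n+1)) ≤ sInf (f '' S (x n)) + (1/2)^n := fun n => (hchoice n (x n)).choose_spec
  have hmono : ∀ n m : ℕ, n ≤ m → x m ∈ S (x n) := by
    intro n m hnm
    induction m with
    | zero => obtain rfl := Nat.le_zero.mp hnm; exact hmemS _
    | succ k ih =>
      rcases Nat.lt_or_ge n (k+1) with h | h
      · exact hStrans _ _ _ (ih (Nat.lt_succ_iff.mp h)) (hxsucc k).1
      · have : n = k + 1 := le_antisymm hnm h
        rw [this]; exact hmemS _
  have hdist : ∀ n m : ℕ, n ≤ m → ε * dist (x n) (x m) ≤ f (x n) - f (x m) := by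
    intro n m hnm
    have := hmono n m hnm
    simp only [hS, Set.mem_setOf_eq] at this
    linarith
  have hanti : Antitone fun n => f (x n) := by
    refine antitone_nat_of_succ_le fun n => ?_
    have := hdist n (n+1) (Nat.le_succ n)
    nlinarith [dist_nonneg (x := x n) (y := x (n+1)), hε]
  have hfbdd : BddBelow (Set.range fun n => f (x n)) :=
    hbdd.mono (by rintro v ⟨n, rfl⟩; exact ⟨x n, rfl⟩)
  set L : ℝ := ⨅ n, f (x n) with hL
  have hLtend : Filter.Tendsto (fun n => f (x n)) atTop (nhds L) :=
    tendsto_atTop_ciInf hanti hfbdd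
  have hLle : ∀ n, L ≤ f (x n) := fun n => ciInf_le hfbdd n
  have hcauchy : CauchySeq x := by
    apply cauchySeq_of_le_tendsto_0 (b := fun N => (f (x N) - L) / ε)
    · intro n m N hn hm
      rcases le_total n m with h | h
      · have h1 := hdist n m h
        have h2 := hanti hn
        have h3 := hLle m
        rw [div_eq_inv_mul, ← mul_le_mul_iff_right₀ hε, ← mul_assoc, mul_inv_cancel₀ hε.ne',
          one_mul]
        simp only at h2 ⊢
        linarith
      · have h1 := hdist m n h
        have h2 := hanti hm
        have h3 := hLle n
        rw [dist_comm, div_eq_inv_mul, ← mul_le_mul_iff_right₀ hε, ← mul_assoc,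
          mul_inv_cancel₀ hε.ne', one_mul]
        simp only at h2 ⊢
        linarith
    · have : Filter.Tendsto (fun N => (f (x N) - L)) atTop (nhds 0) := by
        have := hLtend.sub (tendsto_const_nhds (x := L))
        simpa using this
      simpa using this.div_const ε
  obtain ⟨xb, hxb⟩ := cauchySeq_tendsto_of_complete hcauchy
  have hxbS : ∀ n, xb ∈ S (x n) := by
    intro n
    refine (hSclosed (x n)).mem_of_tendsto hxb ?_
    filter_upwards [Filter.eventually_ge_atTop n] with m hm using hmono n m hm
  have hxb0 : f xb ≤ (⨅ y, f y) + ε := by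
    have h1 := hxbS 0
    simp only [hS, Set.mem_setOf_eq] at h1
    have : x 0 = x₀ := rfl
    rw [this] at h1
    nlinarith [dist_nonneg (x := x₀) (y := xb), hε]
  refine ⟨xb, hxb0, fun y => ?_⟩
  by_contra hcon
  push_neg at hcon
  have hymem : ∀ n, f y ∈ f '' S (x n) := by
    intro n
    refine ⟨y, ?_, rfl⟩
    have h1 := hxbS n
    simp only [hS, Set.mem_setOf_eq] at h1 ⊢
    have htri := dist_triangle (x n) xb y
    nlinarith
  have hkey : ∀ n : ℕ, f xb ≤ f y + (1/2)^n := by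
    intro n
    have h1 := (hxsucc n).2
    have h2 := csInf_le (hSbdd (x n)) (hymem n)
    have h3 := hxbS (n+1)
    simp only [hS, Set.mem_setOf_eq] at h3
    nlinarith [dist_nonneg (x := x (n+1)) (y := xb), hε]
  have : f xb ≤ f y := by
    have htt : Filter.Tendsto (fun n : ℕ => f y + (1/2:ℝ)^n) atTop (nhds (f y)) := by
      have := tendsto_pow_atTop_nhds_zero_of_lt_one (by norm_num : (0:ℝ) ≤ 1/2)
        (by norm_num : (1/2:ℝ) < 1)
      simpa using (tendsto_const_nhds (x := f y)).add this
    exact le_of_tendsto_of_tendsto' tendsto_const_nhds htt hkey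
  nlinarith [dist_nonneg (x := xb) (y := y), hε]

/-- **Group invariant Palais-Smale minimizing sequences.**
If `φ : X → ℝ` is lower semicontinuous, Gâteaux differentiable (with Gâteaux derivative
`δφ`), bounded below, `G`-invariant and convex with respect to `G`, then there is a
sequence of `G`-invariant points `x n` with `φ (x n) → inf φ` and `‖δφ (x n)‖ → 0`. -/
theorem group_invariant_palais_smale_minimizing_sequence
    {X : Type*} [NormedAddCommGroup X] [NormedSpace ℝ X] [CompleteSpace X]
    {G : Type*} [Group G] [TopologicalSpace G] [IsTopologicalGroup G] [CompactSpace G]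
    {mG : MeasurableSpace G} [BorelSpace G]
    (μ : Measure G) [μ.IsHaarMeasure] [IsProbabilityMeasure μ]
    (ρ : G →* (X ≃L[ℝ] X))
    (hactcont : Continuous fun p : G × X => ρ p.1 p.2)
    (hnorminv : ∀ (g : G) (x : X), ‖ρ g x‖ = ‖x‖)
    (φ : X → ℝ) (δφ : X → (X →L[ℝ] ℝ))
    (hlsc : LowerSemicontinuous φ)
    (hgateaux : ∀ x h : X, Tendsto (fun t : ℝ => (φ (x + t • h) - φ x) / t)
      (nhdsWithin 0 {0}ᶜ) (nhds (δφ x h)))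
    (hbdd : BddBelow (Set.range φ))
    (hGinv : ∀ (g : G) (x : X), φ (ρ g x) = φ x)
    (hconv : ∀ x : X, φ (∫ g, ρ g x ∂μ) ≤ ∫ g, φ (ρ g x) ∂μ) :
    ∃ x : ℕ → X, (∀ (n : ℕ) (g : G), ρ g (x n) = x n) ∧
      Tendsto (fun n => φ (x n)) atTop (nhds (⨅ y, φ y)) ∧
      Tendsto (fun n => ‖δφ (x n)‖) atTop (nhds 0) := by
  borelize X
  -- basic facts about the averaging map P
  have hcont : ∀ x : X, Continuous fun g : G => ρ g x :=
    fun x => hactcont.comp (continuous_id.prodMk continuous_const)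
  have hint : ∀ x : X, Integrable (fun g => ρ g x) μ := by
    intro x
    have hsm : StronglyMeasurable (fun g => ρ g x) := by
      rw [stronglyMeasurable_iff_measurable_separable]
      exact ⟨(hcont x).measurable, (isCompact_range (hcont x)).isSeparable⟩
    exact (integrable_const ‖x‖).mono' hsm.aestronglyMeasurable
      (Filter.Eventually.of_forall fun g => (hnorminv g x).le)
  set P : X → X := fun x => ∫ g, ρ g x ∂μ with hP
  have hPinvar : ∀ (g₀ : G) (x : X), ρ g₀ (P x) = P x := by
    intro g₀ x
    have h1 : ρ g₀ (P x) = ∫ g, ρ g₀ (ρ g x) ∂μ :=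
      ((ρ g₀ : X ≃L[ℝ] X).toContinuousLinearMap.integral_comp_comm (hint x)).symm
    rw [h1]
    have h2 : (fun g => ρ g₀ (ρ g x)) = fun g => ρ (g₀ * g) x := by
      ext g; rw [map_mul]; rfl
    rw [h2, integral_mul_left_eq_self (fun g => ρ g x) g₀]
  have hPfix : ∀ x : X, (∀ g, ρ g x = x) → P x = x := by
    intro x hx
    simp only [hP, hx, integral_const, measure_univ, ENNReal.toReal_one, probReal_univ, one_smul]
  have hPnorm : ∀ x : X, ‖P x‖ ≤ ‖x‖ := by
    intro x
    calc ‖P x‖ ≤ ∫ g, ‖ρ g x‖ ∂μ := norm_integral_le_integral_norm _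
    _ = ‖x‖ := by simp [hnorminv]
  have hPadd : ∀ x y : X, P (x + y) = P x + P y := by
    intro x y
    simp only [hP]
    rw [← integral_add (hint x) (hint y)]
    simp [map_add]
  have hPsmul : ∀ (t : ℝ) (x : X), P (t • x) = t • P x := by
    intro t x
    simp only [hP]
    rw [← integral_smul]
    simp [_root_.map_smul]
  have hPneg : ∀ x : X, P (-x) = - P x := by
    intro x
    have := hPsmul (-1) x
    simpa using this
  have hPle : ∀ x : X, φ (P x) ≤ φ x := by
    intro x
    calc φ (P x) ≤ ∫ g, φ (ρ g x) ∂μ := hconv x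
    _ = φ x := by simp [hGinv]
  -- the fixed-point submodule
  let Y : Submodule ℝ X :=
    { carrier := {x | ∀ g, ρ g x = x}
      add_mem' := fun {a b} ha hb g => by simp only [map_add, ha g, hb g]
      zero_mem' := fun g => map_zero _
      smul_mem' := fun c x hx g => by
        simp only [Set.mem_setOf_eq] at hx ⊢
        rw [_root_.map_smul, hx g] }
  have hYmem : ∀ x : X, x ∈ Y ↔ ∀ g, ρ g x = x := fun x => Iff.rfl
  have hYclosed : IsClosed (Y : Set X) := by
    have : (Y : Set X) = ⋂ g : G, {x | ρ g x = x} := by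
      ext x; simp [Set.mem_iInter]; rfl
    rw [this]
    exact isClosed_iInter fun g => isClosed_eq (ρ g).continuous continuous_id
  haveI : CompleteSpace Y := hYclosed.completeSpace_coe
  haveI : Nonempty Y := ⟨0⟩
  set fY : Y → ℝ := fun y => φ y with hfY
  have lscY : LowerSemicontinuous fY := LowerSemicontinuous.comp hlsc continuous_subtype_val
  have bddY : BddBelow (Set.range fY) := by
    refine hbdd.mono ?_
    rintro v ⟨y, rfl⟩; exact ⟨y, rfl⟩
  set m : ℝ := ⨅ y : X, φ y with hm
  set mY : ℝ := ⨅ y : Y, fY y with hmYdef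
  have hmY : mY = m := by
    apply le_antisymm
    · refine le_ciInf fun x => ?_
      calc mY ≤ fY ⟨P x, fun g => hPinvar g x⟩ := ciInf_le bddY _
      _ ≤ φ x := hPle x
    · exact le_ciInf fun y => ciInf_le hbdd (y : X)
  -- derivative bound at Ekeland points
  have hderiv : ∀ (u : Y) (ε : ℝ), 0 < ε →
      (∀ z : Y, φ (u : X) ≤ φ (z : X) + ε * dist u z) → ‖δφ (u : X)‖ ≤ ε := by
    intro u ε hε hek
    have hu : ∀ g, ρ g (u : X) = u := u.2
    have hsubIoi : Set.Ioi (0:ℝ) ⊆ ({0} : Set ℝ)ᶜ := by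
      intro t ht; simp only [Set.mem_compl_iff, Set.mem_singleton_iff]
      exact ne_of_gt ht
    have stepA : ∀ h : X, (∀ g, ρ g h = h) → -(ε * ‖h‖) ≤ δφ (u : X) h := by
      intro h hh
      have htend : Tendsto (fun t : ℝ => (φ ((u : X) + t • h) - φ u) / t)
          (nhdsWithin 0 (Set.Ioi 0)) (nhds (δφ (u : X) h)) :=
        (hgateaux u h).mono_left (nhdsWithin_mono 0 hsubIoi)
      refine ge_of_tendsto htend ?_
      filter_upwards [self_mem_nhdsWithin] with t ht
      have ht' : (0:ℝ) < t := ht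
      have hmem : (u : X) + t • h ∈ Y := Y.add_mem u.2 (Y.smul_mem t hh)
      have h1 := hek ⟨(u : X) + t • h, hmem⟩
      rw [Subtype.dist_eq] at h1
      simp only at h1
      have hd : dist (u : X) ((u : X) + t • h) = t * ‖h‖ := by
        rw [dist_self_add_right, norm_smul, Real.norm_eq_abs, abs_of_pos ht']
      rw [hd] at h1
      rw [le_div_iff₀ ht']
      nlinarith
    have stepA2 : ∀ h : X, (∀ g, ρ g h = h) → |δφ (u : X) h| ≤ ε * ‖h‖ := by
      intro h hh
      have h1 := stepA h hh
      have h2 := stepA (-h) (fun g => by rw [map_neg, hh g])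
      rw [map_neg, norm_neg] at h2
      rw [abs_le]
      constructor <;> linarith
    have stepB : ∀ h : X, δφ (u : X) (P h) ≤ δφ (u : X) h := by
      intro h
      have htend1 : Tendsto (fun t : ℝ => (φ ((u : X) + t • P h) - φ u) / t)
          (nhdsWithin 0 (Set.Ioi 0)) (nhds (δφ (u : X) (P h))) :=
        (hgateaux u (P h)).mono_left (nhdsWithin_mono 0 hsubIoi)
      have htend2 : Tendsto (fun t : ℝ => (φ ((u : X) + t • h) - φ u) / t)
          (nhdsWithin 0 (Set.Ioi 0)) (nhds (δφ (u : X) h)) :=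
        (hgateaux u h).mono_left (nhdsWithin_mono 0 hsubIoi)
      refine le_of_tendsto_of_tendsto htend1 htend2 ?_
      filter_upwards [self_mem_nhdsWithin] with t ht
      have ht' : (0:ℝ) < t := ht
      have hkey : φ ((u : X) + t • P h) ≤ φ ((u : X) + t • h) := by
        have hPu : P ((u : X) + t • h) = (u : X) + t • P h := by
          rw [hPadd, hPsmul, hPfix _ hu]
        calc φ ((u : X) + t • P h) = φ (P ((u : X) + t • h)) := by rw [hPu]
        _ ≤ φ ((u : X) + t • h) := hPle _
      exact (div_le_div_iff_of_pos_right ht').mpr (by linarith)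
    have stepB2 : ∀ h : X, δφ (u : X) h = δφ (u : X) (P h) := by
      intro h
      have h1 := stepB h
      have h2 := stepB (-h)
      rw [hPneg, map_neg, map_neg] at h2
      linarith
    refine ContinuousLinearMap.opNorm_le_bound _ hε.le fun h => ?_
    rw [Real.norm_eq_abs, stepB2 h]
    calc |δφ (u : X) (P h)| ≤ ε * ‖P h‖ := stepA2 (P h) (fun g => hPinvar g h)
    _ ≤ ε * ‖h‖ := by nlinarith [hPnorm h]
  -- apply Ekeland for each n
  have hseq : ∀ n : ℕ, ∃ u : Y, φ (u : X) ≤ m + 1 / (n + 1) ∧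
      ‖δφ (u : X)‖ ≤ 1 / (n + 1) := by
    intro n
    have hpos : (0:ℝ) < 1 / (n + 1) := by positivity
    obtain ⟨u, hu1, hu2⟩ := ekeland_weak fY lscY bddY hpos
    exact ⟨u, by rw [← hmY]; exact hu1, hderiv u _ hpos hu2⟩
  choose u hu1 hu2 using hseq
  refine ⟨fun n => (u n : X), fun n g => (u n).2 g, ?_, ?_⟩
  · have hlow : ∀ n : ℕ, m ≤ φ ((u n : X)) := fun n => ciInf_le hbdd _
    have haux : Tendsto (fun n : ℕ => m + 1 / ((n : ℝ) + 1)) atTop (nhds m) := by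
      have := tendsto_one_div_add_atTop_nhds_zero_nat (𝕜 := ℝ)
      simpa using (tendsto_const_nhds (x := m)).add this
    exact tendsto_of_tendsto_of_tendsto_of_le_of_le tendsto_const_nhds haux hlow hu1
  · have hlow : ∀ n : ℕ, (0:ℝ) ≤ ‖δφ ((u n : X))‖ := fun n => norm_nonneg _
    have haux : Tendsto (fun n : ℕ => 1 / ((n : ℝ) + 1)) atTop (nhds 0) :=
      tendsto_one_div_add_atTop_nhds_zero_nat
    exact tendsto_of_tendsto_of_tendsto_of_le_of_le tendsto_const_nhds haux hlow hu2
end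

section
/- Let f : X → ℝ be lower semicontinuous, Gâteaux differentiable, bounded below, G-invariant, convex with respect to G, and suppose there exists φ : [0, ∞) → ℝ ∪ {+∞} with φ(t)/t → +∞ as t → +∞ and f(x) ≥ φ(‖x‖) for all x ∈ X. Then the set {δf(x) : x ∈ X, x is G-invariant} is dense in X*_G; that is, for every u ∈ X*_G and every η > 0 there exists a G-invariant point x ∈ X with ‖δf(x) − u‖ < η. -/
open MeasureTheory Filter

private lemma lsc_comp_cont {α β : Type*} [TopologicalSpace α] [TopologicalSpace β]
    {p : β → ℝ} (hp : LowerSemicontinuous p) {g : α → β} (hg : Continuous g) :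
    LowerSemicontinuous fun x => p (g x) :=
  fun x a ha => hg.continuousAt.eventually (hp (g x) a ha)

private lemma lsc_add_cont {α : Type*} [TopologicalSpace α] {p q : α → ℝ}
    (hp : LowerSemicontinuous p) (hq : Continuous q) :
    LowerSemicontinuous fun x => p x + q x := by
  intro x a ha
  have ha' : a < p x + q x := ha
  have hθ : 0 < (p x + q x - a) / 2 := by linarith
  have h1 := hp x (p x - (p x + q x - a) / 2) (by linarith)
  have h2 : ∀ᶠ z in nhds x, q x - (p x + q x - a) / 2 < q z :=
    hq.continuousAt.eventually (eventually_gt_nhds (by linarith))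
  filter_upwards [h1, h2] with z hz1 hz2
  linarith

/-- Ekeland variational principle (weak form). -/
private lemma ekeland {α : Type*} [MetricSpace α] [CompleteSpace α] [Nonempty α]
    (F : α → ℝ) (hF : LowerSemicontinuous F) (B : ℝ) (hB : ∀ z, B ≤ F z)
    (ε : ℝ) (hε : 0 < ε) : ∃ x, ∀ y, F x ≤ F y + ε * dist x y := by
  classical
  set S : α → Set α := fun x => {y | F y + ε * dist x y ≤ F x} with hS
  have hself : ∀ x, x ∈ S x := by intro x; simp [hS]
  have htrans : ∀ {x y z : α}, y ∈ S x → z ∈ S y → z ∈ S x := by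
    intro x y z hy hz
    simp only [hS, Set.mem_setOf_eq] at *
    have h3 := dist_triangle x y z
    nlinarith
  have hne : ∀ x, (F '' S x).Nonempty := fun x => ⟨F x, x, hself x, rfl⟩
  have hbdd : ∀ x, BddBelow (F '' S x) := fun x => ⟨B, by rintro _ ⟨y, _, rfl⟩; exact hB y⟩
  have hstep : ∀ (n : ℕ) (x : α), ∃ y, y ∈ S x ∧ F y < sInf (F '' S x) + (1 / 2) ^ n := by
    intro n x
    obtain ⟨_, ⟨y, hy, rfl⟩, hlt⟩ := exists_lt_of_csInf_lt (hne x)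
      (lt_add_of_pos_right _ (by positivity : (0:ℝ) < (1/2)^n))
    exact ⟨y, hy, hlt⟩
  choose step hstepS hstepF using hstep
  obtain ⟨x0⟩ := ‹Nonempty α›
  let c : ℕ → α := fun n => Nat.rec x0 (fun n x => step n x) n
  have hcs : ∀ n, c (n + 1) = step n (c n) := fun n => rfl
  have hsucc : ∀ n, c (n + 1) ∈ S (c n) := fun n => by rw [hcs]; exact hstepS n (c n)
  have hchain : ∀ n m, n ≤ m → c m ∈ S (c n) := by
    intro n m hnm
    induction m, hnm using Nat.le_induction with
    | base => exact hself _
    | succ m hnm ih => exact htrans ih (hsucc m)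
  have hanti : Antitone fun n => F (c n) := by
    apply antitone_nat_of_succ_le
    intro n
    have := hsucc n
    simp only [hS, Set.mem_setOf_eq] at this
    nlinarith [dist_nonneg (x := c n) (y := c (n+1))]
  have hbr : BddBelow (Set.range fun n => F (c n)) := ⟨B, by rintro _ ⟨n, rfl⟩; exact hB _⟩
  set ℓ : ℝ := ⨅ n, F (c n) with hℓ
  have hFtend : Tendsto (fun n => F (c n)) atTop (nhds ℓ) := tendsto_atTop_ciInf hanti hbr
  have hℓle : ∀ n, ℓ ≤ F (c n) := fun n => ciInf_le hbr n
  have hdistle : ∀ n m, n ≤ m → ε * dist (c n) (c m) ≤ F (c n) - F (c m) := by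
    intro n m hnm
    have := hchain n m hnm
    simp only [hS, Set.mem_setOf_eq] at this
    linarith
  have hcauchy : CauchySeq c := by
    apply cauchySeq_of_le_tendsto_0 (fun N => (F (c N) - ℓ) / ε)
    · intro n m N hNn hNm
      rcases le_total n m with h | h
      · have h1 := hdistle n m h
        have h2 := hℓle m
        have h3 := hanti hNn
        rw [le_div_iff₀ hε]
        nlinarith
      · have h1 := hdistle m n h
        have h2 := hℓle n
        have h3 := hanti hNm
        rw [dist_comm, le_div_iff₀ hε]
        nlinarith
    · have : Tendsto (fun N => (F (c N) - ℓ) / ε) atTop (nhds ((ℓ - ℓ) / ε)) :=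
        (hFtend.sub_const ℓ).div_const ε
      simpa using this
  obtain ⟨x, hx⟩ := cauchySeq_tendsto_of_complete hcauchy
  have hmemS : ∀ n, x ∈ S (c n) := by
    intro n
    by_contra hcon
    simp only [hS, Set.mem_setOf_eq, not_le] at hcon
    set θ := (F x + ε * dist (c n) x - F (c n)) / 2 with hθdef
    have hθpos : 0 < θ := by simp only [hθdef]; linarith
    have h1 : ∀ᶠ m in atTop, F x - θ < F (c m) :=
      hx.eventually (hF x (F x - θ) (by linarith))
    have h2 : Tendsto (fun m => ε * dist (c n) (c m)) atTop (nhds (ε * dist (c n) x)) :=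
      (tendsto_const_nhds.dist hx).const_mul ε
    have h3 : ∀ᶠ m in atTop, ε * dist (c n) x - θ < ε * dist (c n) (c m) :=
      h2.eventually (eventually_gt_nhds (by linarith))
    obtain ⟨m, hm1, hm2, hm3⟩ := (h1.and (h3.and (eventually_ge_atTop n))).exists
    have h4 := hdistle n m hm3
    simp only [hθdef] at hm1 hm2
    linarith
  refine ⟨x, fun y => ?_⟩
  by_contra hy
  push_neg at hy
  have hyx : y ∈ S x := le_of_lt hy
  have hySn : ∀ n, y ∈ S (c n) := fun n => htrans (hmemS n) hyx
  have hkey : ∀ n : ℕ, ε * dist x y < (1 / 2) ^ n := by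
    intro n
    have h1 : sInf (F '' S (c n)) ≤ F y := csInf_le (hbdd _) ⟨y, hySn n, rfl⟩
    have h2 : F (c (n + 1)) < F y + (1 / 2) ^ n := by
      have := hstepF n (c n); rw [← hcs] at this; linarith
    have h3 : F x ≤ F (c (n + 1)) := by
      have := hmemS (n + 1)
      simp only [hS, Set.mem_setOf_eq] at this
      nlinarith [dist_nonneg (x := c (n+1)) (y := x)]
    linarith
  have h0 : ε * dist x y ≤ 0 :=
    ge_of_tendsto' (tendsto_pow_atTop_nhds_zero_of_lt_one (by norm_num) (by norm_num : (1:ℝ)/2 < 1))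
      fun n => (hkey n).le
  have hd1 : dist x y ≤ 0 := by
    by_contra hdc
    push_neg at hdc
    nlinarith
  have hd0 : dist x y = 0 := le_antisymm hd1 dist_nonneg
  have hxy : x = y := dist_eq_zero.1 hd0
  rw [hxy, dist_self] at hy
  linarith

/-- If `f : X → ℝ` is lower semicontinuous, Gâteaux differentiable (with derivative `δf`),
bounded below, `G`-invariant, convex with respect to `G`, and superlinear in the sense
that `f x ≥ φ ‖x‖` with `φ t / t → +∞`, then the Gâteaux derivatives at `G`-invariant
points are dense in the `G`-invariant dual. -/
theorem gateaux_derivative_range_dense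
    {X : Type*} [NormedAddCommGroup X] [NormedSpace ℝ X] [CompleteSpace X]
    {G : Type*} [Group G] [TopologicalSpace G] [IsTopologicalGroup G] [CompactSpace G]
    {mG : MeasurableSpace G} [BorelSpace G]
    (μ : Measure G) [μ.IsHaarMeasure] [IsProbabilityMeasure μ]
    (ρ : G →* (X ≃L[ℝ] X))
    (hactcont : Continuous fun p : G × X => ρ p.1 p.2)
    (hnorminv : ∀ (g : G) (x : X), ‖ρ g x‖ = ‖x‖)
    (f : X → ℝ) (δf : X → (X →L[ℝ] ℝ))
    (hlsc : LowerSemicontinuous f)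
    (hgateaux : ∀ x h : X, Tendsto (fun t : ℝ => (f (x + t • h) - f x) / t)
      (nhdsWithin 0 {0}ᶜ) (nhds (δf x h)))
    (hbdd : BddBelow (Set.range f))
    (hGinv : ∀ (g : G) (x : X), f (ρ g x) = f x)
    (hconv : ∀ x : X, f (∫ g, ρ g x ∂μ) ≤ ∫ g, f (ρ g x) ∂μ)
    (φ : ℝ → EReal)
    (hφ : Tendsto (fun t : ℝ => φ t / (t : EReal)) atTop (nhds ⊤))
    (hgrowth : ∀ x : X, φ ‖x‖ ≤ (f x : EReal)) :
    ∀ u : X →L[ℝ] ℝ, (∀ (g : G) (x : X), u (ρ g x) = u x) →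
      ∀ η > (0 : ℝ), ∃ x : X, (∀ g : G, ρ g x = x) ∧ ‖δf x - u‖ < η := by
  intro u hu η hη
  classical
  -- the invariant subspace
  set s : Set X := {x | ∀ g : G, ρ g x = x} with hs_def
  have hs_closed : IsClosed s := by
    have : s = ⋂ g : G, {x | ρ g x = x} := by ext x; simp [hs_def, Set.mem_iInter]
    rw [this]
    exact isClosed_iInter fun g => isClosed_eq (ρ g).continuous continuous_id
  have h0s : (0 : X) ∈ s := fun g => (ρ g).map_zero
  haveI : CompleteSpace s := hs_closed.completeSpace_coe
  haveI : Nonempty s := ⟨⟨0, h0s⟩⟩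
  -- lower bound for f
  obtain ⟨B, hB⟩ := hbdd
  have hBf : ∀ x : X, B ≤ f x := fun x => hB ⟨x, rfl⟩
  -- superlinear growth
  set cM : ℝ := ‖u‖ + 1 with hcM
  have hev : ∀ᶠ t in atTop, (cM : EReal) < φ t / (t : EReal) :=
    hφ.eventually (eventually_gt_nhds (EReal.coe_lt_top cM))
  obtain ⟨T, hT⟩ := eventually_atTop.1 hev
  set M : ℝ := max T 1 with hM
  have key : ∀ x : X, M ≤ ‖x‖ → cM * ‖x‖ ≤ f x := by
    intro x hx
    have hx1 : (1 : ℝ) ≤ ‖x‖ := le_trans (le_max_right _ _) hx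
    have h1 : (cM : EReal) ≤ φ ‖x‖ / (‖x‖ : EReal) :=
      (hT ‖x‖ (le_trans (le_max_left _ _) hx)).le
    have h2 : (cM : EReal) * (‖x‖ : EReal) ≤ φ ‖x‖ :=
      (EReal.le_div_iff_mul_le (by exact_mod_cast lt_of_lt_of_le one_pos hx1)
        (EReal.coe_ne_top _)).1 h1
    have h3 : ((cM * ‖x‖ : ℝ) : EReal) ≤ (f x : EReal) := by
      rw [EReal.coe_mul]; exact h2.trans (hgrowth x)
    exact_mod_cast h3
  -- lower bound for f - u
  have hFlow : ∀ x : X, min 0 (B - ‖u‖ * M) ≤ f x - u x := by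
    intro x
    have hux : u x ≤ ‖u‖ * ‖x‖ := by
      have := u.le_opNorm x
      have h2 := le_abs_self (u x)
      rw [Real.norm_eq_abs] at this
      linarith
    rcases le_total M ‖x‖ with h | h
    · have h1 := key x h
      have h2 : (0:ℝ) ≤ ‖x‖ := norm_nonneg x
      have : min 0 (B - ‖u‖ * M) ≤ 0 := min_le_left _ _
      simp only [hcM] at h1
      nlinarith
    · have h1 := hBf x
      have h2 : ‖u‖ * ‖x‖ ≤ ‖u‖ * M := mul_le_mul_of_nonneg_left h (norm_nonneg u)
      have : min 0 (B - ‖u‖ * M) ≤ B - ‖u‖ * M := min_le_right _ _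
      linarith
  -- Ekeland on the invariant subspace
  set F : s → ℝ := fun y => f y - u y with hF_def
  have hFlsc : LowerSemicontinuous F := by
    have h1 : LowerSemicontinuous fun y : X => f y + (-(u y)) :=
      lsc_add_cont hlsc (u.continuous.neg)
    have h2 : LowerSemicontinuous fun y : s => f (y : X) + (-(u (y : X))) :=
      lsc_comp_cont h1 continuous_subtype_val
    simpa [hF_def, sub_eq_add_neg] using h2
  obtain ⟨xb, hxb⟩ := ekeland F hFlsc (min 0 (B - ‖u‖ * M)) (fun z => hFlow z) (η / 2)
    (by linarith)
  set x : X := (xb : X) with hxdef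
  have hxinv : ∀ g : G, ρ g x = x := xb.2
  -- directional estimate on invariant directions
  have hdir : ∀ v : X, (∀ g : G, ρ g v = v) → -(η / 2 * ‖v‖) ≤ δf x v - u v := by
    intro v hv
    have hmem : ∀ t : ℝ, x + t • v ∈ s := by
      intro t g
      rw [(ρ g).map_add, (ρ g).map_smul, hxinv g, hv g]
    have hineq : ∀ t ∈ Set.Ioi (0 : ℝ),
        u v - η / 2 * ‖v‖ ≤ (f (x + t • v) - f x) / t := by
      intro t ht
      have ht' : (0:ℝ) < t := ht
      have hek := hxb ⟨x + t • v, hmem t⟩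
      have hd : dist xb (⟨x + t • v, hmem t⟩ : s) = t * ‖v‖ := by
        rw [Subtype.dist_eq, dist_eq_norm]
        simp [hxdef, norm_smul, abs_of_pos ht']
      rw [hd] at hek
      simp only [hF_def] at hek
      have hu' : u (x + t • v) = u x + t * u v := by
        rw [u.map_add, u.map_smul]; rfl
      rw [le_div_iff₀ ht']
      simp only [hxdef] at hek hu' ⊢
      nlinarith [hek, hu']
    have hlim : Tendsto (fun t : ℝ => (f (x + t • v) - f x) / t)
        (nhdsWithin 0 (Set.Ioi 0)) (nhds (δf x v)) :=
      (hgateaux x v).mono_left (nhdsWithin_mono 0 (fun t ht => ne_of_gt ht))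
    have := ge_of_tendsto hlim (eventually_nhdsWithin_of_forall hineq)
    linarith
  have habs : ∀ v : X, (∀ g : G, ρ g v = v) → |δf x v - u v| ≤ η / 2 * ‖v‖ := by
    intro v hv
    have h1 := hdir v hv
    have h2 := hdir (-v) (fun g => by rw [(ρ g).map_neg, hv g])
    rw [norm_neg, (δf x).map_neg, u.map_neg] at h2
    exact abs_le.2 ⟨by linarith, by linarith⟩
  -- averaging operator
  have hint : ∀ h : X, Integrable (fun g => ρ g h) μ := by
    intro h
    have hc : Continuous fun g : G => ρ g h :=
      hactcont.comp (continuous_id.prodMk continuous_const)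
    exact hc.integrable_of_hasCompactSupport
      (IsCompact.of_isClosed_subset isCompact_univ (isClosed_tsupport _) (Set.subset_univ _))
  set P : X → X := fun h => ∫ g, ρ g h ∂μ with hP_def
  have hPnorm : ∀ h, ‖P h‖ ≤ ‖h‖ := by
    intro h
    calc ‖∫ g, ρ g h ∂μ‖ ≤ ∫ g, ‖ρ g h‖ ∂μ := norm_integral_le_integral_norm _
    _ = ‖h‖ := by simp [hnorminv]
  have hPinv : ∀ (h : X), P h ∈ s := by
    intro h g'
    have h1 : ρ g' (P h) = ∫ g, ρ g' (ρ g h) ∂μ :=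
      (((ρ g' : X ≃L[ℝ] X) : X →L[ℝ] X).integral_comp_comm (hint h)).symm
    have h2 : (fun g => ρ g' (ρ g h)) = fun g => ρ (g' * g) h := by
      funext g
      rw [map_mul]
      rfl
    have h3 : ∫ g, ρ (g' * g) h ∂μ = ∫ g, ρ g h ∂μ :=
      integral_mul_left_eq_self (fun g => ρ g h) g'
    rw [h1, h2, h3]
  have havg : ∀ (L : X →L[ℝ] ℝ), (∀ (g : G) (h : X), L (ρ g h) = L h) →
      ∀ h : X, L (P h) = L h := by
    intro L hL h
    have h1 : L (P h) = ∫ g, L (ρ g h) ∂μ := (L.integral_comp_comm (hint h)).symm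
    rw [h1]
    simp [hL]
  -- invariance of the derivative at x
  have hδinv : ∀ (g : G) (h : X), δf x (ρ g h) = δf x h := by
    intro g h
    have hfun : (fun t : ℝ => (f (x + t • ρ g h) - f x) / t)
        = fun t : ℝ => (f (x + t • h) - f x) / t := by
      funext t
      have he : x + t • ρ g h = ρ g (x + t • h) := by
        rw [(ρ g).map_add, (ρ g).map_smul, hxinv g]
      rw [he, hGinv]
    exact tendsto_nhds_unique (hfun ▸ hgateaux x (ρ g h)) (hgateaux x h)
  -- conclude
  refine ⟨x, hxinv, ?_⟩
  have hbound : ∀ h : X, ‖(δf x - u) h‖ ≤ η / 2 * ‖h‖ := by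
    intro h
    have e1 : (δf x - u) h = (δf x - u) (P h) := by
      simp only [ContinuousLinearMap.sub_apply]
      rw [havg (δf x) hδinv h, havg u hu h]
    have e2 : |(δf x - u) (P h)| ≤ η / 2 * ‖P h‖ := by
      have := habs (P h) (hPinv h)
      simpa [ContinuousLinearMap.sub_apply] using this
    rw [Real.norm_eq_abs, e1]
    calc |(δf x - u) (P h)| ≤ η / 2 * ‖P h‖ := e2
    _ ≤ η / 2 * ‖h‖ := mul_le_mul_of_nonneg_left (hPnorm h) (by linarith)
  have : ‖δf x - u‖ ≤ η / 2 := ContinuousLinearMap.opNorm_le_bound _ (by linarith) hbound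
  linarith
end

section
/- Let φ : X → ℝ be a continuous, Gâteaux differentiable bump function (φ is not identically zero and has bounded support) that is G-invariant and linear with respect to G. Then X*_G equals the closed linear span of {δφ(x) : x ∈ X_G}, where δφ(x) denotes the Gâteaux derivative of φ at x. -/
open MeasureTheory Filter

set_option maxHeartbeats 1000000

/-- Ekeland's variational principle (weak form) on a closed subset of a complete space. -/
lemma ekeland_aux {E : Type*} [MetricSpace E] [CompleteSpace E] {s : Set E}
    (hs : IsClosed s) {F : E → ℝ} (hF : Continuous F) {c : ℝ}
    (hc : ∀ y ∈ s, c ≤ F y) {x₀ : E} (hx₀ : x₀ ∈ s) {ε : ℝ} (hε : 0 < ε) :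
    ∃ x ∈ s, F x ≤ F x₀ ∧ ∀ y ∈ s, F x ≤ F y + ε * dist x y := by
  classical
  set S : E → Set E := fun z => {y ∈ s | F y + ε * dist y z ≤ F z} with hS
  have hself : ∀ z ∈ s, z ∈ S z := by
    intro z hz; refine ⟨hz, by simp⟩
  have hSne : ∀ z ∈ s, (F '' S z).Nonempty := fun z hz => ⟨F z, z, hself z hz, rfl⟩
  have hSbdd : ∀ z, BddBelow (F '' S z) := by
    intro z; refine ⟨c, ?_⟩; rintro - ⟨y, hy, rfl⟩; exact hc y hy.1
  -- choice of next point
  have key : ∀ (n : ℕ) (z : E), z ∈ s →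
      ∃ y, y ∈ S z ∧ F y ≤ sInf (F '' S z) + (1/2)^n := by
    intro n z hz
    have h1 : sInf (F '' S z) < sInf (F '' S z) + (1/2)^n := by
      have : (0:ℝ) < (1/2)^n := by positivity
      linarith
    obtain ⟨a, ⟨y, hy, rfl⟩, ha⟩ := exists_lt_of_csInf_lt (hSne z hz) h1
    exact ⟨y, hy, ha.le⟩
  choose next hnext1 hnext2 using key
  -- the sequence
  have exu : ∃ u : ℕ → E, u 0 = x₀ ∧ ∀ n, ∃ h : u n ∈ s,
      u (n+1) = next n (u n) h := by
    have : ∀ n (z : {x // x ∈ s}), next n z.1 z.2 ∈ s := fun n z => (hnext1 n z.1 z.2).1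
    refine ⟨fun n => (Nat.rec ⟨x₀, hx₀⟩ (fun n z => ⟨next n z.1 z.2, this n z⟩) n :
       {x // x ∈ s}).1, rfl, ?_⟩
    intro n
    exact ⟨(Nat.rec (motive := fun _ => {x // x ∈ s}) ⟨x₀, hx₀⟩
      (fun n z => ⟨next n z.1 z.2, this n z⟩) n).2, rfl⟩
  obtain ⟨u, hu0, hu⟩ := exu
  have hus : ∀ n, u n ∈ s := fun n => by
    cases n with
    | zero => exact hu0 ▸ hx₀
    | succ n => obtain ⟨h, he⟩ := hu n; exact he ▸ (hnext1 n (u n) h).1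
  have hstep : ∀ n, u (n+1) ∈ S (u n) := by
    intro n; obtain ⟨h, he⟩ := hu n; exact he ▸ hnext1 n (u n) h
  have hinf : ∀ n, F (u (n+1)) ≤ sInf (F '' S (u n)) + (1/2)^n := by
    intro n; obtain ⟨h, he⟩ := hu n; exact he ▸ hnext2 n (u n) h
  -- transitivity of S
  have htrans : ∀ {z y w : E}, y ∈ S z → w ∈ S y → w ∈ S z := by
    rintro z y w ⟨hy, h1⟩ ⟨hw, h2⟩
    refine ⟨hw, ?_⟩
    have := dist_triangle w y z
    nlinarith [dist_nonneg (x := w) (y := y)]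
  have hchain : ∀ n m, n ≤ m → u m ∈ S (u n) := by
    intro n m h
    induction m with
    | zero => simpa [Nat.le_zero.mp h] using hself (u 0) (hus 0)
    | succ m ih =>
      rcases Nat.eq_or_lt_of_le h with rfl | h'
      · exact hself _ (hus _)
      · exact htrans (ih (Nat.lt_succ_iff.mp h')) (hstep m)
  have hdist : ∀ n m, n ≤ m → ε * dist (u m) (u n) ≤ F (u n) - F (u m) := by
    intro n m h
    have := (hchain n m h).2
    linarith
  have hanti : ∀ n m, n ≤ m → F (u m) ≤ F (u n) := by
    intro n m h
    have := hdist n m h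
    nlinarith [dist_nonneg (x := u m) (y := u n)]
  -- F (u n) converges
  have hbddb : ∀ n, c ≤ F (u n) := fun n => hc _ (hus n)
  have hconv : Tendsto (fun n => F (u n)) atTop (nhds (⨅ n, F (u n))) := by
    apply tendsto_atTop_ciInf
    · intro a b hab; exact hanti a b hab
    · exact ⟨c, by rintro - ⟨n, rfl⟩; exact hbddb n⟩
  set L := ⨅ n, F (u n) with hL
  have hLle : ∀ n, L ≤ F (u n) := fun n =>
    ciInf_le ⟨c, by rintro - ⟨n, rfl⟩; exact hbddb n⟩ n
  -- Cauchy
  have hcauchy : CauchySeq u := by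
    apply cauchySeq_of_le_tendsto_0 (fun N => (F (u N) - L) / ε)
    · intro n m N hn hm
      have key : ∀ a b, N ≤ a → N ≤ b → a ≤ b → dist (u a) (u b) ≤ (F (u N) - L)/ε := by
        intro a b ha hb hab
        have h1 := hdist a b hab
        have h2 := hanti N a ha
        have h3 := hLle b
        rw [le_div_iff₀ hε, dist_comm]
        nlinarith
      rcases le_total n m with h | h
      · exact key n m hn hm h
      · rw [dist_comm]; exact key m n hm hn h
    · have : Tendsto (fun N => (F (u N) - L) / ε) atTop (nhds ((L - L)/ε)) :=
        ((hconv.sub tendsto_const_nhds).div_const ε)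
      simpa using this
  obtain ⟨x, hx⟩ := cauchySeq_tendsto_of_complete hcauchy
  have hxs : x ∈ s := hs.mem_of_tendsto hx (Eventually.of_forall hus)
  have hFx : Tendsto (fun n => F (u n)) atTop (nhds (F x)) := (hF.tendsto x).comp hx
  have hFxL : F x = L := tendsto_nhds_unique hFx hconv
  refine ⟨x, hxs, ?_, ?_⟩
  · have := hLle 0
    rw [hFxL, hu0] at *
    linarith [hLle 0]
  · intro y hy
    by_contra hcon
    push_neg at hcon
    set δ := F x - (F y + ε * dist x y) with hδ
    have hδpos : 0 < δ := by linarith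
    -- eventually y ∈ S (u n)
    have hev : ∀ᶠ n in atTop, y ∈ S (u n) := by
      have h1 : Tendsto (fun n => dist x (u n)) atTop (nhds 0) :=
        (tendsto_iff_dist_tendsto_zero.mp hx).congr (fun n => dist_comm (u n) x)
      have h2 : ∀ᶠ n in atTop, ε * dist x (u n) < δ/2 := by
        have := (h1.const_mul ε)
        rw [mul_zero] at this
        exact this.eventually (eventually_lt_nhds (by linarith))
      have h3 : ∀ᶠ n in atTop, F x - δ/2 < F (u n) :=
        hconv.eventually (eventually_gt_nhds (by rw [← hFxL]; linarith))
      filter_upwards [h2, h3] with n h2 h3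
      refine ⟨hy, ?_⟩
      have htri := dist_triangle y x (u n)
      have : ε * dist y (u n) ≤ ε * dist y x + ε * dist x (u n) := by
        rw [← mul_add]; exact mul_le_mul_of_nonneg_left htri hε.le
      rw [dist_comm y x] at this
      nlinarith
    -- then F (u (n+1)) ≤ F y + (1/2)^n
    have hev2 : ∀ᶠ n in atTop, F (u (n+1)) ≤ F y + (1/2)^n := by
      filter_upwards [hev] with n hn
      calc F (u (n+1)) ≤ sInf (F '' S (u n)) + (1/2)^n := hinf n
        _ ≤ F y + (1/2)^n := by
            have := csInf_le (hSbdd (u n)) ⟨y, hn, rfl⟩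
            linarith
    have hlim : Tendsto (fun n => F y + (1/2:ℝ)^n) atTop (nhds (F y + 0)) :=
      tendsto_const_nhds.add (tendsto_pow_atTop_nhds_zero_of_lt_one (by norm_num) (by norm_num))
    have hlim2 : Tendsto (fun n => F (u (n+1))) atTop (nhds L) :=
      hconv.comp (tendsto_add_atTop_nat 1)
    have : L ≤ F y + 0 := le_of_tendsto_of_tendsto hlim2 hlim hev2
    have hd := dist_nonneg (x := x) (y := y)
    nlinarith [hFxL]

/-- **Description of the `G`-invariant dual.**
If `φ : X → ℝ` is a continuous Gâteaux differentiable bump function which is `G`-invariant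
and linear with respect to `G`, then the `G`-invariant dual `X*_G` is the closed linear
span of the Gâteaux derivatives `δφ x` at `G`-invariant points `x`. -/
theorem group_invariant_dual_eq_closed_span_of_bump_derivatives
    {X : Type*} [NormedAddCommGroup X] [NormedSpace ℝ X] [CompleteSpace X]
    {G : Type*} [Group G] [TopologicalSpace G] [IsTopologicalGroup G] [CompactSpace G]
    {mG : MeasurableSpace G} [BorelSpace G]
    (μ : Measure G) [μ.IsHaarMeasure] [IsProbabilityMeasure μ]
    (ρ : G →* (X ≃L[ℝ] X))
    (hactcont : Continuous fun p : G × X => ρ p.1 p.2)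
    (hnorminv : ∀ (g : G) (x : X), ‖ρ g x‖ = ‖x‖)
    (φ : X → ℝ) (δφ : X → (X →L[ℝ] ℝ))
    (hcont : Continuous φ)
    (hgateaux : ∀ x h : X, Tendsto (fun t : ℝ => (φ (x + t • h) - φ x) / t)
      (nhdsWithin 0 {0}ᶜ) (nhds (δφ x h)))
    (hbump_ne : φ ≠ 0)
    (hbump_supp : Bornology.IsBounded (Function.support φ))
    (hGinv : ∀ (g : G) (x : X), φ (ρ g x) = φ x)
    (hlin : ∀ x : X, φ (∫ g, ρ g x ∂μ) = φ x) :
    {f : X →L[ℝ] ℝ | ∀ (g : G) (x : X), f (ρ g x) = f x} =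
      closure (Submodule.span ℝ
        {u : X →L[ℝ] ℝ | ∃ x : X, (∀ g : G, ρ g x = x) ∧ u = δφ x} : Set (X →L[ℝ] ℝ)) := by
  classical
  set XG : Set X := {x | ∀ g : G, ρ g x = x} with hXGdef
  -- XG is a closed submodule-like set
  have hXGclosed : IsClosed XG := by
    have : XG = ⋂ g : G, {x | ρ g x = x} := by ext x; simp [hXGdef, Set.mem_iInter]
    rw [this]
    exact isClosed_iInter fun g => isClosed_eq (ρ g).continuous continuous_id
  have hXGadd : ∀ {x y : X}, x ∈ XG → y ∈ XG → x + y ∈ XG := by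
    intro x y hx hy g; rw [map_add, hx g, hy g]
  have hXGsmul : ∀ {x : X} (t : ℝ), x ∈ XG → t • x ∈ XG := by
    intro x t hx g; rw [_root_.map_smul, hx g]
  -- integrability of orbit maps
  have horbcont : ∀ x : X, Continuous fun g : G => ρ g x := fun x =>
    hactcont.comp (continuous_id.prodMk continuous_const)
  have hinteg : ∀ x : X, Integrable (fun g : G => ρ g x) μ := fun x =>
    (horbcont x).integrable_of_hasCompactSupport (isClosed_tsupport _).isCompact
  -- symmetrization
  have hbarXG : ∀ x : X, (∫ g, ρ g x ∂μ) ∈ XG := by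
    intro x g'
    have h1 : ∫ g, (ρ g' : X →L[ℝ] X) (ρ g x) ∂μ = (ρ g' : X →L[ℝ] X) (∫ g, ρ g x ∂μ) :=
      ContinuousLinearMap.integral_comp_comm _ (hinteg x)
    have h2 : (fun g => (ρ g' : X →L[ℝ] X) (ρ g x)) = fun g => ρ (g' * g) x := by
      ext g; simp [map_mul]; rfl
    rw [h2] at h1
    rw [show ((ρ g') (∫ g, ρ g x ∂μ) : X) = (ρ g' : X →L[ℝ] X) (∫ g, ρ g x ∂μ) from rfl,
      ← h1, integral_mul_left_eq_self (fun g => ρ g x) g']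
  have hbarfix : ∀ (u : X →L[ℝ] ℝ), (∀ (g : G) (z : X), u (ρ g z) = u z) →
      ∀ x : X, u (∫ g, ρ g x ∂μ) = u x := by
    intro u hu x
    rw [← ContinuousLinearMap.integral_comp_comm u (hinteg x)]
    simp only [hu]
    simp
  have hbarnorm : ∀ x : X, ‖∫ g, ρ g x ∂μ‖ ≤ ‖x‖ := by
    intro x
    calc ‖∫ g, ρ g x ∂μ‖ ≤ ∫ g, ‖ρ g x‖ ∂μ := norm_integral_le_integral_norm _
      _ = ‖x‖ := by simp [hnorminv]
  -- norm of an invariant functional is controlled by values on XG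
  have hnormctrl : ∀ (u : X →L[ℝ] ℝ), (∀ (g : G) (z : X), u (ρ g z) = u z) → ∀ {C : ℝ},
      0 ≤ C → (∀ y ∈ XG, |u y| ≤ C * ‖y‖) → ‖u‖ ≤ C := by
    intro u hu C hC hbound
    refine u.opNorm_le_bound hC (fun x => ?_)
    have h1 : u x = u (∫ g, ρ g x ∂μ) := (hbarfix u hu x).symm
    rw [Real.norm_eq_abs, h1]
    calc |u (∫ g, ρ g x ∂μ)| ≤ C * ‖∫ g, ρ g x ∂μ‖ := hbound _ (hbarXG x)
      _ ≤ C * ‖x‖ := mul_le_mul_of_nonneg_left (hbarnorm x) hC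
  -- invariance of the derivative at invariant points
  have hδinv : ∀ x ∈ XG, ∀ (g : G) (y : X), δφ x (ρ g y) = δφ x y := by
    intro x hx g y
    have heq : (fun t : ℝ => (φ (x + t • ρ g y) - φ x) / t)
        = fun t : ℝ => (φ (x + t • y) - φ x) / t := by
      ext t
      have : x + t • (ρ g y : X) = ρ g (x + t • y) := by
        rw [_root_.map_add, _root_.map_smul, hx g]
      rw [this, hGinv]
    have h1 := hgateaux x (ρ g y)
    rw [heq] at h1
    exact tendsto_nhds_unique h1 (hgateaux x y)
  -- the RHS set is contained in the invariant functionals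
  apply Set.eq_of_subset_of_subset ?_ ?_
  · -- hard direction
    intro f hf
    rw [Metric.mem_closure_iff]
    intro ε hε
    have hε2 : 0 < ε / 2 := by linarith
    -- starting point
    obtain ⟨y₀, hy₀⟩ : ∃ y : X, φ y ≠ 0 := by
      by_contra hcon
      push_neg at hcon
      exact hbump_ne (funext fun y => hcon y)
    set x₀ : X := ∫ g, ρ g y₀ ∂μ with hx₀def
    have hx₀G : x₀ ∈ XG := hbarXG y₀
    have hφx₀ : φ x₀ ≠ 0 := by rw [hx₀def, hlin]; exact hy₀
    -- radius of the support
    obtain ⟨r, hr⟩ := (Metric.isBounded_iff_subset_closedBall (0 : X)).mp hbump_supp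
    set r' : ℝ := max r 0 with hr'def
    have hsupp : ∀ z : X, φ z ≠ 0 → ‖z‖ ≤ r' := by
      intro z hz
      have := hr (Function.mem_support.mpr hz)
      rw [Metric.mem_closedBall, dist_zero_right] at this
      exact this.trans (le_max_left _ _)
    set R : ℝ := r' + 1 with hRdef
    have hr'0 : 0 ≤ r' := le_max_right _ _
    have hR0 : 0 < R := by linarith
    -- constants
    set A : ℝ := ((φ x₀) ^ 2)⁻¹ with hAdef
    have hφx₀2 : 0 < (φ x₀) ^ 2 := by positivity
    have hA0 : 0 < A := by positivity
    set M : ℝ := ‖f‖ * R + A + |f x₀| + 1 with hMdef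
    have hM0 : 0 < M := by
      have h1 : 0 ≤ ‖f‖ * R := mul_nonneg (norm_nonneg _) hR0.le
      have h2 : 0 ≤ |f x₀| := abs_nonneg _
      linarith
    have hMA : 1 ≤ M * (φ x₀) ^ 2 := by
      have h1 : A ≤ M := by
        have h2 : 0 ≤ ‖f‖ * R := mul_nonneg (norm_nonneg _) hR0.le
        have h3 : 0 ≤ |f x₀| := abs_nonneg _
        rw [hMdef]; linarith
      calc (1:ℝ) = A * (φ x₀)^2 := by rw [hAdef]; field_simp
        _ ≤ M * (φ x₀)^2 := mul_le_mul_of_nonneg_right h1 hφx₀2.le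
    -- the function Ψ
    set Ψ : X → ℝ := fun x => M / max 1 (M * (φ x) ^ 2) with hΨdef
    have hmaxpos : ∀ x : X, 0 < max 1 (M * (φ x) ^ 2) := fun x =>
      lt_of_lt_of_le one_pos (le_max_left _ _)
    have hΨcont : Continuous Ψ :=
      continuous_const.div (continuous_const.max ((continuous_const.mul (hcont.pow 2))))
        (fun x => (hmaxpos x).ne')
    have hΨpos : ∀ x : X, 0 < Ψ x := fun x => div_pos hM0 (hmaxpos x)
    have hΨle : ∀ x : X, Ψ x ≤ M := fun x => by
      rw [hΨdef]
      exact div_le_self hM0.le (le_max_left _ _)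
    have hΨeq : ∀ x : X, 1 ≤ M * (φ x) ^ 2 → Ψ x = ((φ x) ^ 2)⁻¹ := by
      intro x hx
      have hφ2 : (0:ℝ) < (φ x)^2 := by
        by_contra hcon
        push_neg at hcon
        have : (φ x)^2 = 0 := le_antisymm hcon (sq_nonneg _)
        rw [this] at hx; simp at hx; linarith
      rw [hΨdef]
      simp only [max_eq_right hx]
      rw [div_eq_iff (by positivity)]
      field_simp
      exact (div_self (fun h0 => by simp [h0] at hφ2)).symm
    have hΨeqM : ∀ x : X, M * (φ x) ^ 2 ≤ 1 → Ψ x = M := by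
      intro x hx
      rw [hΨdef]; simp only [max_eq_left hx, div_one]
    have hΨx₀ : Ψ x₀ = A := hΨeq x₀ hMA
    -- the closed set K
    set K : Set X := Metric.closedBall (0:X) R ∩ XG with hKdef
    have hKclosed : IsClosed K := Metric.isClosed_closedBall.inter hXGclosed
    have hx₀K : x₀ ∈ K := by
      constructor
      · rw [Metric.mem_closedBall, dist_zero_right]
        have := hsupp x₀ hφx₀
        linarith
      · exact hx₀G
    -- the function to minimize
    set F : X → ℝ := fun x => Ψ x - f x with hFdef
    have hFcont : Continuous F := hΨcont.sub f.continuous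
    have hFbd : ∀ y ∈ K, -(‖f‖ * R) ≤ F y := by
      intro y hy
      have h1 : f y ≤ ‖f‖ * R := by
        calc f y ≤ |f y| := le_abs_self _
          _ ≤ ‖f‖ * ‖y‖ := f.le_opNorm y
          _ ≤ ‖f‖ * R := by
              refine mul_le_mul_of_nonneg_left ?_ (norm_nonneg _)
              have := hy.1
              rwa [Metric.mem_closedBall, dist_zero_right] at this
      have := hΨpos y
      rw [hFdef]; dsimp only; linarith
    -- Ekeland
    obtain ⟨x, hxK, hxval, hEk⟩ := ekeland_aux hKclosed hFcont hFbd hx₀K hε2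
    -- the Ekeland point is in the good region
    have hgood : 1 < M * (φ x) ^ 2 := by
      by_contra hcon
      push_neg at hcon
      have h1 : Ψ x = M := hΨeqM x hcon
      have h2 : F x ≤ F x₀ := hxval
      have h3 : F x₀ = A - f x₀ := by rw [hFdef]; dsimp only; rw [hΨx₀]
      have h4 : f x ≤ ‖f‖ * R := by
        calc f x ≤ |f x| := le_abs_self _
          _ ≤ ‖f‖ * ‖x‖ := f.le_opNorm x
          _ ≤ ‖f‖ * R := by
              refine mul_le_mul_of_nonneg_left ?_ (norm_nonneg _)
              have := hxK.1
              rwa [Metric.mem_closedBall, dist_zero_right] at this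
      have h5 : f x₀ ≤ |f x₀| := le_abs_self _
      have h6 : F x = M - f x := by rw [hFdef]; dsimp only; rw [h1]
      rw [h6, h3] at h2
      have : -|f x₀| ≤ f x₀ := neg_abs_le _
      rw [hMdef] at h2
      linarith
    have hφx : φ x ≠ 0 := by
      intro hcon
      rw [hcon] at hgood; simp at hgood; linarith
    have hφx2 : 0 < (φ x)^2 := by positivity
    have hxXG : x ∈ XG := hxK.2
    have hxr : ‖x‖ ≤ r' := hsupp x hφx
    -- the approximating functional
    set u : X →L[ℝ] ℝ := ((-2) / (φ x) ^ 3) • δφ x with hudef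
    have huspan : u ∈ (Submodule.span ℝ
        {v : X →L[ℝ] ℝ | ∃ z : X, (∀ g : G, ρ g z = z) ∧ v = δφ z} : Set (X →L[ℝ] ℝ)) :=
      Submodule.smul_mem _ _ (Submodule.subset_span ⟨x, hxXG, rfl⟩)
    -- one-sided estimate
    have hclaim : ∀ h ∈ XG, f h - u h ≤ ε / 2 * ‖h‖ := by
      intro h hh
      -- the line stays in XG
      have hline : ∀ t : ℝ, x + t • h ∈ XG := fun t => hXGadd hxXG (hXGsmul t hh)
      -- eventually in the ball and in the good region
      have hq : Tendsto (fun t : ℝ => φ (x + t • h)) (nhds 0) (nhds (φ x)) := by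
        have hc : Continuous fun t : ℝ => x + t • h :=
          continuous_const.add (continuous_id.smul continuous_const)
        have := (hcont.comp hc).tendsto 0
        simpa [Function.comp_def] using this
      have hev1 : ∀ᶠ t in nhdsWithin (0:ℝ) (Set.Ioi 0), 1 < M * (φ (x + t • h)) ^ 2 := by
        apply eventually_nhdsWithin_of_eventually_nhds
        have : Tendsto (fun t : ℝ => M * (φ (x + t • h)) ^ 2) (nhds 0)
            (nhds (M * (φ x) ^ 2)) := tendsto_const_nhds.mul (hq.pow 2)
        exact this.eventually (eventually_gt_nhds hgood)
      have hev2 : ∀ᶠ t in nhdsWithin (0:ℝ) (Set.Ioi 0), x + t • h ∈ K := by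
        apply eventually_nhdsWithin_of_eventually_nhds
        have hc : Tendsto (fun t : ℝ => ‖x + t • h‖) (nhds 0) (nhds ‖x‖) := by
          have hc2 : Continuous fun t : ℝ => ‖x + t • h‖ :=
            (continuous_const.add (continuous_id.smul continuous_const)).norm
          have := hc2.tendsto 0
          simpa using this
        have : ∀ᶠ t in nhds (0:ℝ), ‖x + t • h‖ < R := by
          apply hc.eventually (eventually_lt_nhds ?_)
          rw [hRdef]; linarith
        filter_upwards [this] with t ht
        exact ⟨by rw [Metric.mem_closedBall, dist_zero_right]; exact ht.le, hline t⟩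
      -- the difference quotient of Ψ
      have hΨlim : Tendsto (fun t : ℝ => (Ψ (x + t • h) - Ψ x) / t)
          (nhdsWithin (0:ℝ) (Set.Ioi 0)) (nhds (u h)) := by
        have hmono : nhdsWithin (0:ℝ) (Set.Ioi 0) ≤ nhdsWithin (0:ℝ) {0}ᶜ :=
          nhdsWithin_mono 0 (fun t ht => ne_of_gt ht)
        have hd : Tendsto (fun t : ℝ => (φ (x + t • h) - φ x) / t)
            (nhdsWithin (0:ℝ) (Set.Ioi 0)) (nhds (δφ x h)) :=
          (hgateaux x h).mono_left hmono
        have hqw : Tendsto (fun t : ℝ => φ (x + t • h)) (nhdsWithin (0:ℝ) (Set.Ioi 0))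
            (nhds (φ x)) := hq.mono_left nhdsWithin_le_nhds
        have hlim2 : Tendsto (fun t : ℝ =>
            -((φ (x + t • h) - φ x) / t) * ((φ (x + t • h) + φ x) /
              ((φ (x + t • h)) ^ 2 * (φ x) ^ 2)))
            (nhdsWithin (0:ℝ) (Set.Ioi 0))
            (nhds (-(δφ x h) * ((φ x + φ x) / ((φ x) ^ 2 * (φ x) ^ 2)))) := by
          exact (hd.neg.mul (((hqw.add tendsto_const_nhds)).div
            ((hqw.pow 2).mul tendsto_const_nhds) (by positivity)))
        have hval : -(δφ x h) * ((φ x + φ x) / ((φ x) ^ 2 * (φ x) ^ 2)) = u h := by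
          rw [hudef]
          simp only [ContinuousLinearMap.coe_smul', Pi.smul_apply, smul_eq_mul]
          field_simp
          ring
        rw [hval] at hlim2
        apply hlim2.congr'
        filter_upwards [hev1, self_mem_nhdsWithin] with t ht1 ht2
        have hφt : φ (x + t • h) ≠ 0 := by
          intro hcon
          rw [hcon] at ht1; simp at ht1; linarith
        have ht0 : (t:ℝ) ≠ 0 := ne_of_gt ht2
        rw [hΨeq _ ht1.le, hΨeq x hgood.le]
        field_simp
        ring
      -- Ekeland inequality gives an eventual lower bound on the quotient
      have hevineq : ∀ᶠ t in nhdsWithin (0:ℝ) (Set.Ioi 0),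
          f h - ε / 2 * ‖h‖ ≤ (Ψ (x + t • h) - Ψ x) / t := by
        filter_upwards [hev1, hev2, self_mem_nhdsWithin] with t ht1 ht2 ht0
        have ht0' : (0:ℝ) < t := ht0
        have hEk2 := hEk (x + t • h) ht2
        have hdist : dist x (x + t • h) = t * ‖h‖ := by
          rw [dist_eq_norm]
          simp [norm_smul, abs_of_pos ht0']
        have hfval : f (x + t • h) = f x + t * f h := by
          rw [_root_.map_add, _root_.map_smul]; simp
        rw [hFdef] at hEk2
        dsimp only at hEk2
        rw [hdist, hfval] at hEk2
        rw [le_div_iff₀ ht0']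
        have hkey : t * (f h) - ε / 2 * (t * ‖h‖) ≤ Ψ (x + t • h) - Ψ x := by linarith
        calc (f h - ε / 2 * ‖h‖) * t = t * f h - ε / 2 * (t * ‖h‖) := by ring
          _ ≤ Ψ (x + t • h) - Ψ x := hkey
      have hne : (nhdsWithin (0:ℝ) (Set.Ioi 0)).NeBot := by infer_instance
      have := ge_of_tendsto hΨlim hevineq
      linarith
    -- two-sided estimate and conclusion
    have hbound : ∀ h ∈ XG, |(f - u) h| ≤ ε / 2 * ‖h‖ := by
      intro h hh
      have h1 := hclaim h hh
      have hneg : -h ∈ XG := by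
        intro g; rw [map_neg, hh g]
      have h2 := hclaim (-h) hneg
      rw [map_neg, map_neg, norm_neg] at h2
      rw [abs_le]
      constructor
      · simp only [ContinuousLinearMap.sub_apply]; linarith
      · simp only [ContinuousLinearMap.sub_apply]; linarith
    -- u is invariant
    have huinv : ∀ (g : G) (z : X), u (ρ g z) = u z := by
      intro g z
      rw [hudef]
      simp only [ContinuousLinearMap.coe_smul', Pi.smul_apply, smul_eq_mul]
      rw [hδinv x hxXG g z]
    have hfu_inv : ∀ (g : G) (z : X), (f - u) (ρ g z) = (f - u) z := by
      intro g z
      simp only [ContinuousLinearMap.sub_apply, hf g z, huinv g z]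
    have hfu : ‖f - u‖ ≤ ε / 2 := hnormctrl (f - u) hfu_inv hε2.le hbound
    exact ⟨u, huspan, by rw [dist_eq_norm]; linarith⟩
  · -- easy direction : closure of span ⊆ invariant functionals
    set Minv : Submodule ℝ (X →L[ℝ] ℝ) :=
      { carrier := {f : X →L[ℝ] ℝ | ∀ (g : G) (x : X), f (ρ g x) = f x}
        add_mem' := by
          intro a b ha hb g x
          simp only [ContinuousLinearMap.add_apply, ha g x, hb g x]
        zero_mem' := by intro g x; simp
        smul_mem' := by
          intro c a ha g x
          simp only [ContinuousLinearMap.coe_smul', Pi.smul_apply, smul_eq_mul, ha g x] } with hMinv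
    have hMclosed : IsClosed (Minv : Set (X →L[ℝ] ℝ)) := by
      have : (Minv : Set (X →L[ℝ] ℝ)) = ⋂ g : G, ⋂ x : X, {f : X →L[ℝ] ℝ | f (ρ g x) = f x} := by
        ext f; simp [hMinv, Set.mem_iInter]
      rw [this]
      refine isClosed_iInter fun g => isClosed_iInter fun x => isClosed_eq ?_ ?_
      · exact (ContinuousLinearMap.apply ℝ ℝ (ρ g x)).continuous
      · exact (ContinuousLinearMap.apply ℝ ℝ x).continuous
    have hgen : {v : X →L[ℝ] ℝ | ∃ z : X, (∀ g : G, ρ g z = z) ∧ v = δφ z} ⊆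
        (Minv : Set (X →L[ℝ] ℝ)) := by
      rintro v ⟨z, hz, rfl⟩ g x
      exact hδinv z hz g x
    have hspan : (Submodule.span ℝ
        {v : X →L[ℝ] ℝ | ∃ z : X, (∀ g : G, ρ g z = z) ∧ v = δφ z} : Set (X →L[ℝ] ℝ)) ⊆
        (Minv : Set (X →L[ℝ] ℝ)) := Submodule.span_le.mpr hgen
    exact closure_minimal hspan hMclosed
end

section
/- Assume that for every x ∈ X the symmetrization x̄ exists in X (i.e., the Bochner integral ∫_G g(x) dμ(g), computed in the completion of X, belongs to X). Then X_G, the set of G-invariant points of X, is complete (a Banach space) if and only if for every function f : X → ℝ that is bounded below, Lipschitz continuous, G-invariant and convex with respect to G, and for every ε > 0, there exists x₀ ∈ X_G such that f(x₀) ≤ inf_{x ∈ X} f(x) + ε and f(x₀) ≤ f(x) + ε‖x − x₀‖ for all x ∈ X with x ≠ x₀. -/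
open MeasureTheory

open Filter Topology UniformSpace

section Aux

open MeasureTheory Filter Topology UniformSpace

variable {X : Type*} [NormedAddCommGroup X] [NormedSpace ℝ X]
    {G : Type*} [Group G] [TopologicalSpace G] [IsTopologicalGroup G] [CompactSpace G]
    {mG : MeasurableSpace G} [BorelSpace G]
    (μ : Measure G) [μ.IsHaarMeasure] [IsProbabilityMeasure μ]
    (ρ : G →* (X ≃L[ℝ] X))

theorem my_integrable
    (hactcont : Continuous fun p : G × X => ρ p.1 p.2)
    (hnorminv : ∀ (g : G) (x : X), ‖ρ g x‖ = ‖x‖) (x : X) :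
    Integrable (fun g => ((ρ g x : X) : Completion X)) μ := by
  borelize (Completion X)
  have hc : Continuous fun g : G => ((ρ g x : X) : Completion X) :=
    (Completion.continuous_coe X).comp
      (hactcont.comp (continuous_id.prodMk continuous_const))
  have hmeas : AEStronglyMeasurable (fun g => ((ρ g x : X) : Completion X)) μ :=
    (stronglyMeasurable_iff_measurable_separable.2
      ⟨hc.measurable, (isCompact_range hc).isSeparable⟩).aestronglyMeasurable
  refine (integrable_const ‖x‖).mono' hmeas (ae_of_all _ fun g => ?_)
  rw [Completion.norm_coe, hnorminv]

theorem my_bar_inv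
    (hactcont : Continuous fun p : G × X => ρ p.1 p.2)
    (hnorminv : ∀ (g : G) (x : X), ‖ρ g x‖ = ‖x‖)
    (bar : X → X)
    (hbar : ∀ x : X, ((bar x : X) : Completion X) = ∫ g, ((ρ g x : X) : Completion X) ∂μ)
    (x : X) (g₀ : G) : ρ g₀ (bar x) = bar x := by
  apply Completion.coe_injective X
  let L : Completion X →L[ℝ] Completion X :=
    (Completion.toComplL.comp (ρ g₀ : X ≃L[ℝ] X).toContinuousLinearMap).extend
      (Completion.toComplL (𝕜 := ℝ) (E := X))
  have hL : ∀ y : X, L ((y : X) : Completion X) = ((ρ g₀ y : X) : Completion X) := by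
    intro y
    exact ContinuousLinearMap.extend_eq _ Completion.denseRange_coe
      (Completion.isUniformInducing_coe X) y
  calc ((ρ g₀ (bar x) : X) : Completion X) = L ((bar x : X) : Completion X) := (hL _).symm
    _ = L (∫ g, ((ρ g x : X) : Completion X) ∂μ) := by rw [hbar]
    _ = ∫ g, L ((ρ g x : X) : Completion X) ∂μ :=
        (L.integral_comp_comm (my_integrable μ ρ hactcont hnorminv x)).symm
    _ = ∫ g, ((ρ (g₀ * g) x : X) : Completion X) ∂μ := by
        congr 1; funext g; rw [hL, map_mul]; rfl
    _ = ∫ g, ((ρ g x : X) : Completion X) ∂μ :=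
        integral_mul_left_eq_self (fun g => ((ρ g x : X) : Completion X)) g₀
    _ = ((bar x : X) : Completion X) := (hbar x).symm

theorem my_bar_fix
    (bar : X → X)
    (hbar : ∀ x : X, ((bar x : X) : Completion X) = ∫ g, ((ρ g x : X) : Completion X) ∂μ)
    (x : X) (hx : ∀ g : G, ρ g x = x) : bar x = x := by
  apply Completion.coe_injective X
  rw [hbar]
  simp only [hx]
  simp

theorem my_bar_contract
    (hactcont : Continuous fun p : G × X => ρ p.1 p.2)
    (hnorminv : ∀ (g : G) (x : X), ‖ρ g x‖ = ‖x‖)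
    (bar : X → X)
    (hbar : ∀ x : X, ((bar x : X) : Completion X) = ∫ g, ((ρ g x : X) : Completion X) ∂μ)
    (x x₀ : X) (hx₀ : ∀ g : G, ρ g x₀ = x₀) : ‖bar x - x₀‖ ≤ ‖x - x₀‖ := by
  have h1 : ((bar x - x₀ : X) : Completion X)
      = ∫ g, (((ρ g x : X) : Completion X) - ((x₀ : X) : Completion X)) ∂μ := by
    rw [integral_sub (my_integrable μ ρ hactcont hnorminv x) (integrable_const _),
      integral_const]
    simp [Completion.coe_sub, hbar]
  have : ‖((bar x - x₀ : X) : Completion X)‖ ≤ ‖x - x₀‖ := by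
    rw [h1]
    refine (norm_integral_le_integral_norm _).trans ?_
    have heq : ∀ g : G, ‖((ρ g x : X) : Completion X) - ((x₀ : X) : Completion X)‖
        = ‖x - x₀‖ := by
      intro g
      rw [← Completion.coe_sub, Completion.norm_coe]
      calc ‖ρ g x - x₀‖ = ‖ρ g (x - x₀)‖ := by rw [map_sub, hx₀]
        _ = ‖x - x₀‖ := hnorminv _ _
    rw [integral_congr_ae (ae_of_all _ heq), integral_const]
    simp
  rwa [Completion.norm_coe] at this

end Aux

theorem my_ekeland {α : Type*} [MetricSpace α] [CompleteSpace α] [Nonempty α]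
    (f : α → ℝ) (K : NNReal) (hf : LipschitzWith K f) (hbdd : BddBelow (Set.range f))
    {ε : ℝ} (hε : 0 < ε) :
    ∃ x₀ : α, f x₀ ≤ (⨅ x, f x) + ε ∧ ∀ x : α, f x₀ ≤ f x + ε * dist x x₀ := by
  obtain ⟨a, ha⟩ : ∃ a : α, f a < (⨅ x, f x) + ε := by
    apply exists_lt_of_ciInf_lt
    linarith [le_refl (⨅ x, f x)]
  have hstep : ∀ x : α, ∃ y, (f y + ε * dist x y ≤ f x) ∧
      ∀ z, f z + ε * dist x z ≤ f x → 2 * f y - f x ≤ f z := by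
    intro x
    set S : Set α := {y | f y + ε * dist x y ≤ f x} with hS
    have hxS : x ∈ S := by simp [hS]
    have hbddS : BddBelow (f '' S) := hbdd.mono (Set.image_subset_range f S)
    have hne : (f '' S).Nonempty := ⟨f x, x, hxS, rfl⟩
    set m := sInf (f '' S) with hm
    have hle : ∀ z ∈ S, m ≤ f z := fun z hz => csInf_le hbddS ⟨z, hz, rfl⟩
    by_cases hcase : f x ≤ m
    · refine ⟨x, by simpa using hxS, fun z hz => ?_⟩
      have := hle z hz
      linarith
    · push_neg at hcase
      obtain ⟨b, ⟨y, hyS, rfl⟩, hb⟩ : ∃ b ∈ f '' S, b < (m + f x) / 2 :=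
        exists_lt_of_csInf_lt hne (by linarith)
      exact ⟨y, hyS, fun z hz => by have := hle z hz; linarith⟩
  let u : ℕ → α := fun n => Nat.rec a (fun _ x => (hstep x).choose) n
  have huS : ∀ n, f (u (n + 1)) + ε * dist (u n) (u (n + 1)) ≤ f (u n) :=
    fun n => (hstep (u n)).choose_spec.1
  have hmin : ∀ n z, f z + ε * dist (u n) z ≤ f (u n) → 2 * f (u (n + 1)) - f (u n) ≤ f z :=
    fun n => (hstep (u n)).choose_spec.2
  have hdec : ∀ n, f (u (n + 1)) ≤ f (u n) := fun n => by
    have h1 := huS n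
    have h2 : 0 ≤ ε * dist (u n) (u (n + 1)) := by positivity
    linarith
  have hanti : Antitone fun n => f (u n) := antitone_nat_of_succ_le hdec
  have hbddu : BddBelow (Set.range fun n => f (u n)) :=
    hbdd.mono (Set.range_comp_subset_range u f)
  set L := ⨅ n, f (u n) with hLdef
  have htend : Tendsto (fun n => f (u n)) atTop (𝓝 L) := tendsto_atTop_ciInf hanti hbddu
  have hLle : ∀ n, L ≤ f (u n) := fun n => ciInf_le hbddu n
  have hdist : ∀ n m, n ≤ m → ε * dist (u n) (u m) ≤ f (u n) - f (u m) := by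
    intro n m hnm
    induction m, hnm using Nat.le_induction with
    | base => simp
    | succ m hnm ih =>
      have h1 := huS m
      have h2 : dist (u n) (u (m + 1)) ≤ dist (u n) (u m) + dist (u m) (u (m + 1)) :=
        dist_triangle _ _ _
      nlinarith [dist_nonneg (x := u n) (y := u (m + 1))]
  have hcauchy : CauchySeq u := by
    apply cauchySeq_of_le_tendsto_0 (fun n => (f (u n) - L) / ε)
    · intro n m N hn hm
      have key : ∀ p q, N ≤ p → p ≤ q → dist (u p) (u q) ≤ (f (u N) - L) / ε := by
        intro p q hp hpq
        rw [le_div_iff₀ hε]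
        have h1 := hdist p q hpq
        have h2 := hLle q
        have h3 := hanti hp
        nlinarith
      rcases le_total n m with h | h
      · exact key n m hn h
      · rw [dist_comm]; exact key m n hm h
    · have : Tendsto (fun n => (f (u n) - L) / ε) atTop (𝓝 ((L - L) / ε)) :=
        (htend.sub tendsto_const_nhds).div_const ε
      simpa using this
  obtain ⟨x₀, hx₀⟩ := cauchySeq_tendsto_of_complete hcauchy
  have hfx₀ : f x₀ = L :=
    tendsto_nhds_unique ((hf.continuous.tendsto x₀).comp hx₀) htend
  refine ⟨x₀, ?_, ?_⟩
  · have h0 : L ≤ f (u 0) := hLle 0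
    have : f (u 0) = f a := rfl
    linarith [hfx₀ ▸ h0, ha, this ▸ h0]
  · intro z
    by_contra hcon
    push_neg at hcon
    have hdz : 0 < L - (f z + ε * dist x₀ z) := by
      rw [dist_comm x₀ z]; linarith [hfx₀ ▸ hcon]
    set δ := L - (f z + ε * dist x₀ z) with hδ
    have hdtend : Tendsto (fun n => ε * dist (u n) x₀) atTop (𝓝 0) := by
      have := (tendsto_iff_dist_tendsto_zero.mp hx₀).const_mul ε
      simpa using this
    have hev : ∀ᶠ n in atTop, ε * dist (u n) x₀ < δ :=
      hdtend.eventually (gt_mem_nhds hdz)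
    have hev2 : ∀ᶠ n in atTop, 2 * f (u (n + 1)) - f (u n) ≤ f z := by
      filter_upwards [hev] with n hn
      apply hmin n z
      have h1 : dist (u n) z ≤ dist (u n) x₀ + dist x₀ z := dist_triangle _ _ _
      have h2 := hLle n
      nlinarith
    have htend2 : Tendsto (fun n => 2 * f (u (n + 1)) - f (u n)) atTop (𝓝 (2 * L - L)) :=
      ((htend.comp (tendsto_add_atTop_nat 1)).const_mul 2).sub htend
    have hLlez : L ≤ f z := by
      have := le_of_tendsto htend2 hev2
      linarith
    have : 0 ≤ ε * dist x₀ z := by positivity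
    linarith

/-- **Characterization of the completeness of `X_G`.**
Assume every point of the normed space `X` has a symmetrization `bar x ∈ X` (the Bochner
integral `∫_G g x dμ g` computed in the completion of `X`). Then the set `X_G` of
`G`-invariant points is complete if and only if every bounded below, Lipschitz,
`G`-invariant function `f : X → ℝ` which is convex with respect to `G` satisfies, for
every `ε > 0`, the Ekeland-type conclusion at some `G`-invariant point `x₀`. -/
theorem group_invariant_points_complete_iff_ekeland
    {X : Type*} [NormedAddCommGroup X] [NormedSpace ℝ X]
    {G : Type*} [Group G] [TopologicalSpace G] [IsTopologicalGroup G] [CompactSpace G]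
    {mG : MeasurableSpace G} [BorelSpace G]
    (μ : Measure G) [μ.IsHaarMeasure] [IsProbabilityMeasure μ]
    (ρ : G →* (X ≃L[ℝ] X))
    (hactcont : Continuous fun p : G × X => ρ p.1 p.2)
    (hnorminv : ∀ (g : G) (x : X), ‖ρ g x‖ = ‖x‖)
    (bar : X → X)
    (hbar : ∀ x : X, ((bar x : X) : UniformSpace.Completion X) =
      ∫ g, ((ρ g x : X) : UniformSpace.Completion X) ∂μ) :
    IsComplete {x : X | ∀ g : G, ρ g x = x} ↔
      ∀ f : X → ℝ, BddBelow (Set.range f) → (∃ K : NNReal, LipschitzWith K f) →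
        (∀ (g : G) (x : X), f (ρ g x) = f x) → (∀ x : X, f (bar x) ≤ f x) →
        ∀ ε > (0 : ℝ), ∃ x₀ : X, (∀ g : G, ρ g x₀ = x₀) ∧
          f x₀ ≤ (⨅ x, f x) + ε ∧ ∀ x : X, x ≠ x₀ → f x₀ ≤ f x + ε * ‖x - x₀‖ := by
  set S : Set X := {x : X | ∀ g : G, ρ g x = x} with hSdef
  constructor
  · -- completeness → Ekeland property
    intro hcomp f hbdd ⟨K, hlip⟩ hinv hconv ε hε
    haveI : CompleteSpace S := hcomp.completeSpace_coe
    haveI : Nonempty S := ⟨⟨0, fun g => map_zero (ρ g : X ≃L[ℝ] X).toLinearEquiv.toLinearMap⟩⟩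
    have hlipF : LipschitzWith K (fun y : S => f (y : X)) := by
      simpa [Function.comp_def] using hlip.comp isometry_subtype_coe.lipschitz
    have hbddF : BddBelow (Set.range fun y : S => f (y : X)) :=
      hbdd.mono (Set.range_comp_subset_range _ f)
    obtain ⟨x₀, hx₀1, hx₀2⟩ := my_ekeland (fun y : S => f (y : X)) K hlipF hbddF hε
    refine ⟨(x₀ : X), x₀.2, ?_, ?_⟩
    · refine hx₀1.trans (add_le_add_left ?_ ε)
      refine le_ciInf fun x => ?_
      have h1 : (⨅ y : S, f (y : X)) ≤ f ((⟨bar x, my_bar_inv μ ρ hactcont hnorminv bar hbar x⟩ : S) : X) :=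
        ciInf_le hbddF _
      exact h1.trans (hconv x)
    · intro x _
      have h1 := hx₀2 ⟨bar x, my_bar_inv μ ρ hactcont hnorminv bar hbar x⟩
      have h2 : dist (⟨bar x, my_bar_inv μ ρ hactcont hnorminv bar hbar x⟩ : S) x₀
          = ‖bar x - (x₀ : X)‖ := by
        rw [Subtype.dist_eq, dist_eq_norm]
      have h3 : ‖bar x - (x₀ : X)‖ ≤ ‖x - (x₀ : X)‖ :=
        my_bar_contract μ ρ hactcont hnorminv bar hbar x _ x₀.2
      have h4 : f (bar x) ≤ f x := hconv x
      have h5 : ε * ‖bar x - (x₀ : X)‖ ≤ ε * ‖x - (x₀ : X)‖ :=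
        mul_le_mul_of_nonneg_left h3 hε.le
      rw [h2] at h1
      calc f (x₀ : X) ≤ f (bar x) + ε * ‖bar x - (x₀ : X)‖ := h1
        _ ≤ f x + ε * ‖x - (x₀ : X)‖ := add_le_add h4 h5
  · -- Ekeland property → completeness
    intro h
    rw [← completeSpace_coe_iff_isComplete]
    apply Metric.complete_of_cauchySeq_tendsto
    intro u hu
    set v : ℕ → X := fun n => (u n : X) with hv
    have hvinv : ∀ n g, ρ g (v n) = v n := fun n => (u n).2
    have hw : CauchySeq fun n => ((v n : X) : Completion X) :=
      ((hu.map uniformContinuous_subtype_val).map (Completion.uniformContinuous_coe X))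
    obtain ⟨y, hy⟩ := cauchySeq_tendsto_of_complete hw
    set f : X → ℝ := fun x => ‖((x : X) : Completion X) - y‖ with hf
    have hkey : ∀ (g : G) (x : X), ‖((ρ g x : X) : Completion X) - y‖ = f x := by
      intro g x
      have t1 : Tendsto (fun n => ‖((ρ g x : X) : Completion X) - ((v n : X) : Completion X)‖)
          atTop (𝓝 ‖((ρ g x : X) : Completion X) - y‖) := (tendsto_const_nhds.sub hy).norm
      have t2 : Tendsto (fun n => ‖((x : X) : Completion X) - ((v n : X) : Completion X)‖)
          atTop (𝓝 (f x)) := (tendsto_const_nhds.sub hy).norm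
      have heq : (fun n => ‖((ρ g x : X) : Completion X) - ((v n : X) : Completion X)‖)
          = fun n => ‖((x : X) : Completion X) - ((v n : X) : Completion X)‖ := by
        funext n
        rw [← Completion.coe_sub, ← Completion.coe_sub, Completion.norm_coe,
          Completion.norm_coe]
        calc ‖ρ g x - v n‖ = ‖ρ g (x - v n)‖ := by rw [map_sub, hvinv]
          _ = ‖x - v n‖ := hnorminv _ _
      rw [heq] at t1
      exact tendsto_nhds_unique t1 t2
    have hbddf : BddBelow (Set.range f) :=
      ⟨0, fun r ⟨x, hx⟩ => hx ▸ norm_nonneg _⟩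
    have hlipf : LipschitzWith 1 f := by
      apply LipschitzWith.of_dist_le_mul
      intro a b
      rw [Real.dist_eq, NNReal.coe_one, one_mul, dist_eq_norm]
      calc |‖((a : X) : Completion X) - y‖ - ‖((b : X) : Completion X) - y‖|
          ≤ ‖(((a : X) : Completion X) - y) - (((b : X) : Completion X) - y)‖ :=
            abs_norm_sub_norm_le _ _
        _ = ‖a - b‖ := by
            rw [sub_sub_sub_cancel_right, ← Completion.coe_sub, Completion.norm_coe]
    have hinvf : ∀ (g : G) (x : X), f (ρ g x) = f x := hkey
    have hconvf : ∀ x : X, f (bar x) ≤ f x := by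
      intro x
      have h1 : ((bar x : X) : Completion X) - y
          = ∫ g, (((ρ g x : X) : Completion X) - y) ∂μ := by
        rw [integral_sub (my_integrable μ ρ hactcont hnorminv x) (integrable_const _),
          integral_const, hbar]
        simp
      show ‖((bar x : X) : Completion X) - y‖ ≤ f x
      rw [h1]
      refine (norm_integral_le_integral_norm _).trans ?_
      rw [integral_congr_ae (ae_of_all _ fun g => hkey g x), integral_const]
      simp
    obtain ⟨x₀, hx₀inv, hx₀1, hx₀2⟩ :=
      h f hbddf ⟨1, hlipf⟩ hinvf hconvf (1/2) one_half_pos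
    have hftend : Tendsto (fun n => f (v n)) atTop (𝓝 0) := by
      have : Tendsto (fun n => ‖((v n : X) : Completion X) - y‖) atTop (𝓝 ‖y - y‖) :=
        (hy.sub tendsto_const_nhds).norm
      simpa using this
    have hinf0 : (⨅ x, f x) ≤ 0 :=
      ge_of_tendsto hftend (Eventually.of_forall fun n => ciInf_le hbddf (v n))
    have hfx₀0 : f x₀ = 0 := by
      have hub : ∀ n, f x₀ ≤ 3 * f (v n) := by
        intro n
        by_cases hne : v n = x₀
        · have : f x₀ = f (v n) := by rw [hne]
          have h0 : 0 ≤ f (v n) := norm_nonneg _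
          linarith
        · have h1 := hx₀2 (v n) hne
          have h2 : ‖v n - x₀‖ ≤ f (v n) + f x₀ := by
            have : ((v n - x₀ : X) : Completion X)
                = (((v n : X) : Completion X) - y) - (((x₀ : X) : Completion X) - y) := by
              rw [Completion.coe_sub]; abel
            calc ‖v n - x₀‖ = ‖((v n - x₀ : X) : Completion X)‖ :=
                  (Completion.norm_coe _).symm
              _ ≤ f (v n) + f x₀ := by
                  rw [this]
                  refine (norm_sub_le _ _).trans ?_
                  exact le_refl _
          nlinarith [norm_nonneg (v n - x₀)]
      have h3tend : Tendsto (fun n => 3 * f (v n)) atTop (𝓝 0) := by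
        simpa using hftend.const_mul 3
      have hle : f x₀ ≤ 0 := ge_of_tendsto h3tend (Eventually.of_forall hub)
      exact le_antisymm hle (norm_nonneg _)
    have hcoe : ((x₀ : X) : Completion X) = y := by
      have := hfx₀0
      rw [hf] at this
      simpa [sub_eq_zero] using norm_eq_zero.mp this
    refine ⟨⟨x₀, hx₀inv⟩, ?_⟩
    rw [tendsto_subtype_rng]
    rw [tendsto_iff_norm_sub_tendsto_zero]
    have heq : (fun n => ‖v n - x₀‖) = fun n => f (v n) := by
      funext n
      show ‖v n - x₀‖ = ‖((v n : X) : Completion X) - y‖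
      rw [← hcoe, ← Completion.coe_sub, Completion.norm_coe]
    exact (congrArg (Tendsto · atTop (𝓝 0)) heq).mpr hftend
end

section
/- Let C ⊆ X be a nonempty convex, closed, bounded and G-invariant subset. Then the G-invariant functionals attaining their supremum on C are dense in X*_G: for every f ∈ X*_G and every ε > 0 there exist h̃ ∈ X*_G and a G-invariant point x₀ ∈ C such that h̃(x₀) = sup_{x ∈ C} h̃(x) and ‖h̃ − f‖ ≤ ε. -/
section BishopPhelpsAux

open Set

variable {E : Type*} [NormedAddCommGroup E] [NormedSpace ℝ E]

/-- An Ekeland/Bishop–Phelps type "support point" lemma. -/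
lemma bp_ekeland_point [CompleteSpace E] (B : Set E) (hB : IsClosed B) (hne : B.Nonempty)
    (f : E →L[ℝ] ℝ) (hbdd : BddAbove (f '' B)) {δ : ℝ} (hδ : 0 < δ) :
    ∃ z ∈ B, ∀ x ∈ B, f z + δ * ‖x - z‖ ≤ f x → x = z := by
  classical
  set S : E → Set E := fun y => {x ∈ B | f y + δ * ‖x - y‖ ≤ f x} with hS
  have hmemself : ∀ y ∈ B, y ∈ S y := by
    intro y hy
    refine ⟨hy, by simp⟩
  have hsub : ∀ y, S y ⊆ B := fun y x hx => hx.1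
  have htrans : ∀ y z, z ∈ S y → ∀ x, x ∈ S z → x ∈ S y := by
    intro y z hz x hx
    refine ⟨hx.1, ?_⟩
    have h1 := hz.2
    have h2 := hx.2
    have tri : ‖x - y‖ ≤ ‖x - z‖ + ‖z - y‖ := by
      simpa [dist_eq_norm] using dist_triangle x z y
    nlinarith [hδ.le]
  have hbddS : ∀ y, BddAbove (f '' S y) := fun y => hbdd.mono (Set.image_mono (hsub y))
  have step : ∀ y ∈ B, ∀ β : ℝ, 0 < β → ∃ z, z ∈ S y ∧ ∀ x ∈ S z, f x < f z + β := by
    intro y hy β hβ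
    have hne' : (f '' S y).Nonempty := ⟨f y, Set.mem_image_of_mem f (hmemself y hy)⟩
    obtain ⟨v, hv, hv2⟩ := exists_lt_of_lt_csSup hne'
      (show sSup (f '' S y) - β < sSup (f '' S y) by linarith)
    obtain ⟨z, hzS, rfl⟩ := hv
    refine ⟨z, hzS, fun x hx => ?_⟩
    have hxy : x ∈ S y := htrans y z hzS x hx
    have hle : f x ≤ sSup (f '' S y) := le_csSup (hbddS y) (Set.mem_image_of_mem f hxy)
    linarith
  choose! nxt h1 h2 using step
  obtain ⟨y0, hy0⟩ := hne
  set u : ℕ → E := fun n => Nat.rec y0 (fun n xn => nxt xn ((1/2 : ℝ)^n)) n with hu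
  have husucc : ∀ n, u (n+1) = nxt (u n) ((1/2 : ℝ)^n) := fun n => rfl
  have hpow : ∀ n : ℕ, (0:ℝ) < (1/2 : ℝ)^n := fun n => by positivity
  have humem : ∀ n, u n ∈ B := by
    intro n
    induction n with
    | zero => exact hy0
    | succ n ih =>
      rw [husucc]
      exact hsub _ (h1 _ ih _ (hpow n))
  have hustep : ∀ n, u (n+1) ∈ S (u n) := by
    intro n; rw [husucc]; exact h1 _ (humem n) _ (hpow n)
  have huprop : ∀ n, ∀ x ∈ S (u (n+1)), f x < f (u (n+1)) + (1/2 : ℝ)^n := by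
    intro n; rw [husucc]; exact h2 _ (humem n) _ (hpow n)
  have hchain : ∀ n m, n ≤ m → u m ∈ S (u n) := by
    intro n m hnm
    induction m, hnm using Nat.le_induction with
    | base => exact hmemself _ (humem n)
    | succ m hnm ih => exact htrans (u n) (u m) ih (u (m+1)) (hustep m)
  have keydist : ∀ n, ∀ x ∈ S (u (n+1)), δ * ‖x - u (n+1)‖ < (1/2 : ℝ)^n := by
    intro n x hx
    have h1' := hx.2
    have h2' := huprop n x hx
    linarith
  have hcauchy : CauchySeq u := by
    rw [Metric.cauchySeq_iff']
    intro ε hε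
    obtain ⟨N, hN⟩ := exists_pow_lt_of_lt_one (mul_pos hδ hε) (by norm_num : (1/2 : ℝ) < 1)
    refine ⟨N + 1, fun n hn => ?_⟩
    have hmem : u n ∈ S (u (N+1)) := hchain (N+1) n hn
    have := keydist N (u n) hmem
    rw [dist_eq_norm]
    have := this.trans hN
    nlinarith [norm_nonneg (u n - u (N+1))]
  obtain ⟨z, hz⟩ := cauchySeq_tendsto_of_complete hcauchy
  have hSclosed : ∀ y, IsClosed (S y) := by
    intro y
    have : S y = B ∩ {x | f y + δ * ‖x - y‖ ≤ f x} := rfl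
    rw [this]
    exact hB.inter (isClosed_le (by fun_prop) f.continuous)
  have hzS : ∀ n, z ∈ S (u n) := by
    intro n
    refine (hSclosed (u n)).mem_of_tendsto hz ?_
    filter_upwards [Filter.eventually_atTop.2 ⟨n, fun m hm => hchain n m hm⟩] with m hm using hm
  refine ⟨z, hsub _ (hzS 0), fun x hxB hxge => ?_⟩
  have hxS : ∀ n, x ∈ S (u n) := by
    intro n
    have h1' := (hzS n).2
    refine ⟨hxB, ?_⟩
    have tri : ‖x - u n‖ ≤ ‖x - z‖ + ‖z - u n‖ := by
      simpa [dist_eq_norm] using dist_triangle x z (u n)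
    nlinarith [hδ.le]
  have hbound : ∀ n : ℕ, δ * ‖x - z‖ < 2 * (1/2 : ℝ)^n := by
    intro n
    have hxn := keydist n x (hxS (n+1))
    have hzn := keydist n z (hzS (n+1))
    have tri : ‖x - z‖ ≤ ‖x - u (n+1)‖ + ‖z - u (n+1)‖ := by
      have h := dist_triangle x (u (n+1)) z
      simp only [dist_eq_norm] at h
      rw [norm_sub_rev (u (n+1)) z] at h
      exact h
    nlinarith [hδ.le]
  by_contra hne'
  have hxz : 0 < ‖x - z‖ := norm_pos_iff.2 (sub_ne_zero.2 hne')
  obtain ⟨n, hn⟩ := exists_pow_lt_of_lt_one (show (0:ℝ) < δ * ‖x - z‖ / 2 by positivity)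
    (by norm_num : (1/2 : ℝ) < 1)
  have := hbound n
  linarith


private lemma bp_alg {A m c : ℝ} (h : ∀ t : ℝ, 0 < t → A + t * m < c) : A ≤ c := by
  by_contra hAc
  push_neg at hAc
  rcases le_or_gt 0 m with hm | hm
  · have := h 1 one_pos
    nlinarith
  · have ht : 0 < (c - A) / m := div_pos_of_neg_of_neg (by linarith) hm
    have := h _ ht
    rw [div_mul_cancel₀ _ (ne_of_lt hm)] at this
    linarith

lemma bp_separation (B : Set E) (hconv : Convex ℝ B) (f : E →L[ℝ] ℝ) {δ : ℝ} (hδ : 0 < δ)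
    (hδf : δ < ‖f‖) {z : E} (hz : z ∈ B)
    (hmax : ∀ x ∈ B, f z + δ * ‖x - z‖ ≤ f x → x = z) :
    ∃ p : E →L[ℝ] ℝ, p ≠ 0 ∧ (∀ x ∈ B, p z ≤ p x) ∧ (∀ u, δ * ‖u‖ ≤ f u → p u ≤ 0) := by
  -- find u₀ with δ‖u₀‖ < f u₀
  obtain ⟨u₀, hu₀⟩ : ∃ u₀ : E, δ * ‖u₀‖ < f u₀ := by
    by_contra hc
    push_neg at hc
    have : ‖f‖ ≤ δ := by
      refine f.opNorm_le_bound hδ.le fun x => ?_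
      rw [Real.norm_eq_abs, abs_le]
      constructor
      · have := hc (-x)
        simp only [map_neg, norm_neg] at this
        linarith
      · exact hc x
    linarith
  set s : Set E := {x | f z + δ * ‖x - z‖ < f x} with hs
  have hsopen : IsOpen s := by
    have h1 : Continuous fun x : E => f z + δ * ‖x - z‖ := by fun_prop
    exact isOpen_lt h1 f.continuous
  have hsconv : Convex ℝ s := by
    intro x hx y hy a b ha hb hab
    rcases eq_or_lt_of_le ha with rfl | ha'
    · simpa [show b = 1 by linarith] using hy
    rcases eq_or_lt_of_le hb with rfl | hb'
    · simpa [show a = 1 by linarith] using hx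
    have hx' : f z + δ * ‖x - z‖ < f x := hx
    have hy' : f z + δ * ‖y - z‖ < f y := hy
    show f z + δ * ‖a • x + b • y - z‖ < f (a • x + b • y)
    have hzz : a • x + b • y - z = a • (x - z) + b • (y - z) := by
      have h1 : a • (x - z) + b • (y - z) = a • x + b • y - (a + b) • z := by
        rw [smul_sub, smul_sub, add_smul]
        abel
      rw [h1, hab, one_smul]
    have hnn : ‖a • x + b • y - z‖ ≤ a * ‖x - z‖ + b * ‖y - z‖ := by
      rw [hzz]
      refine (norm_add_le _ _).trans ?_
      rw [norm_smul, norm_smul, Real.norm_eq_abs, Real.norm_eq_abs,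
        abs_of_nonneg ha, abs_of_nonneg hb]
    have hf : f (a • x + b • y) = a * f x + b * f y := by
      rw [map_add, map_smul, map_smul]; rfl
    rw [hf]
    have e1 : δ * ‖a • x + b • y - z‖ ≤ δ * (a * ‖x - z‖ + b * ‖y - z‖) :=
      mul_le_mul_of_nonneg_left hnn hδ.le
    have e2 : a * (f z + δ * ‖x - z‖) < a * f x := mul_lt_mul_of_pos_left hx' ha'
    have e3 : b * (f z + δ * ‖y - z‖) < b * f y := mul_lt_mul_of_pos_left hy' hb'
    have e4 : a * f z + b * f z = f z := by rw [← add_mul, hab, one_mul]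
    nlinarith [e1, e2, e3, e4]
  have hdisj : Disjoint s B := by
    rw [Set.disjoint_left]
    intro x hxs hxB
    have hxz : x = z := hmax x hxB (le_of_lt hxs)
    rw [hxz] at hxs
    simp only [hs, mem_setOf_eq, sub_self, norm_zero, mul_zero, add_zero] at hxs
    exact lt_irrefl _ hxs
  obtain ⟨p, c, hps, hpB⟩ := geometric_hahn_banach_open hsconv hsopen hconv hdisj
  have hmem_ray : ∀ (u : E), δ * ‖u‖ ≤ f u → ∀ t : ℝ, 0 < t → z + u + t • u₀ ∈ s := by
    intro u hu t ht
    show f z + δ * ‖z + u + t • u₀ - z‖ < f (z + u + t • u₀)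
    have h1 : z + u + t • u₀ - z = u + t • u₀ := by abel
    rw [h1]
    have h2 : ‖u + t • u₀‖ ≤ ‖u‖ + t * ‖u₀‖ := by
      refine (norm_add_le _ _).trans ?_
      rw [norm_smul, Real.norm_eq_abs, abs_of_pos ht]
    have h3 : f (z + u + t • u₀) = f z + f u + t * f u₀ := by
      rw [map_add, map_add, map_smul]; rfl
    rw [h3]
    nlinarith
  have hpz : ∀ (u : E), δ * ‖u‖ ≤ f u → p z + p u ≤ c := by
    intro u hu
    refine bp_alg (m := p u₀) fun t ht => ?_
    have := hps _ (hmem_ray u hu t ht)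
    rw [map_add, map_add, map_smul] at this
    simpa [smul_eq_mul, add_assoc] using this
  have hzc : p z ≤ c := by
    have := hpz 0 (by simp)
    simpa using this
  have hcz : c ≤ p z := hpB z hz
  have hpzc : p z = c := le_antisymm hzc hcz
  refine ⟨p, ?_, fun x hx => hpzc ▸ hpB x hx, fun u hu => ?_⟩
  · intro hp0
    have h1 := hps _ (hmem_ray 0 (by simp) 1 one_pos)
    have h2 := hpB z hz
    rw [hp0] at h1 h2
    simp at h1 h2
    linarith
  · have := hpz u hu
    rw [hpzc] at *
    linarith


lemma bp_phelps (f h : E →L[ℝ] ℝ) {δ : ℝ} (hδ : 0 < δ) (hδf : 10 * δ ≤ ‖f‖)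
    (hh : h ≠ 0) (hpos : ∀ u, δ * ‖u‖ ≤ f u → 0 ≤ h u) :
    ∃ l : ℝ, 0 < l ∧ ‖f - l • h‖ ≤ 4 * δ := by
  have hF0 : 0 < ‖f‖ := lt_of_lt_of_le (by linarith) hδf
  have hFδ : (0:ℝ) < ‖f‖ + δ := by linarith
  -- a point w with f w = ‖f‖ and controlled norm
  obtain ⟨w, hfw, hwn⟩ : ∃ w : E, f w = ‖f‖ ∧ ‖w‖ ≤ (‖f‖ + δ) / ‖f‖ := by
    have hlt : ‖f‖ * ‖f‖ / (‖f‖ + δ) < ‖f‖ := by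
      rw [div_lt_iff₀ hFδ]
      nlinarith
    obtain ⟨z₁, hz₁, hz₂⟩ := f.exists_lt_apply_of_lt_opNorm hlt
    rw [Real.norm_eq_abs] at hz₂
    obtain ⟨z, hz1, hz2⟩ : ∃ z : E, ‖z‖ < 1 ∧ ‖f‖ * ‖f‖ / (‖f‖ + δ) < f z := by
      rcases abs_cases (f z₁) with ⟨he, _⟩ | ⟨he, _⟩
      · exact ⟨z₁, hz₁, by rw [← he]; exact hz₂⟩
      · refine ⟨-z₁, by simpa using hz₁, ?_⟩
        rw [map_neg]
        rw [he] at hz₂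
        linarith
    have hz2' : ‖f‖ * ‖f‖ < f z * (‖f‖ + δ) := by
      rw [← div_lt_iff₀ hFδ]
      exact hz2
    have hfz0 : 0 < f z := by nlinarith
    refine ⟨(‖f‖ / f z) • z, ?_, ?_⟩
    · rw [map_smul, smul_eq_mul]
      field_simp
    · rw [norm_smul, Real.norm_eq_abs, abs_of_pos (by positivity)]
      have h1 : ‖f‖ / f z * ‖z‖ ≤ ‖f‖ / f z * 1 :=
        mul_le_mul_of_nonneg_left hz1.le (by positivity)
      rw [mul_one] at h1
      refine h1.trans ?_
      rw [div_le_div_iff₀ hfz0 hF0]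
      nlinarith
  have hwn2 : ‖w‖ ≤ 2 := by
    refine hwn.trans ?_
    rw [div_le_iff₀ hF0]
    linarith
  have hwK : δ * ‖w‖ ≤ f w := by
    rw [hfw]
    nlinarith [norm_nonneg w]
  -- the auxiliary scale s
  obtain ⟨s, hsd, hs0⟩ : ∃ s : ℝ, δ * s = ‖f‖ - 2 * δ ∧ 0 < s := by
    refine ⟨(‖f‖ - 2 * δ) / δ, ?_, div_pos (by linarith) hδ⟩
    field_simp
  -- key estimate on the kernel of f
  have hker1 : ∀ v : E, f v = 0 → -(h w / s * ‖v‖) ≤ h v := by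
    intro v hv
    rcases eq_or_ne v 0 with rfl | hv0
    · simp
    have hvn : 0 < ‖v‖ := norm_pos_iff.2 hv0
    have hun : ‖(s / ‖v‖) • v‖ = s := by
      rw [norm_smul, Real.norm_eq_abs, abs_of_pos (div_pos hs0 hvn)]
      field_simp
    have hK : δ * ‖w + (s / ‖v‖) • v‖ ≤ f (w + (s / ‖v‖) • v) := by
      have h1 : ‖w + (s / ‖v‖) • v‖ ≤ 2 + s := by
        refine (norm_add_le _ _).trans ?_
        rw [hun]
        linarith
      have h2 : f (w + (s / ‖v‖) • v) = ‖f‖ := by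
        rw [map_add, hfw, map_smul, smul_eq_mul, hv]
        ring
      rw [h2]
      nlinarith
    have h0 := hpos _ hK
    rw [map_add, map_smul, smul_eq_mul] at h0
    have hd : 0 < s / ‖v‖ := div_pos hs0 hvn
    have e1 : h w / s * ‖v‖ * (s / ‖v‖) = h w := by
      field_simp
    nlinarith [h0, hd, e1]
  have hker : ∀ v : E, f v = 0 → |h v| ≤ h w / s * ‖v‖ := by
    intro v hv
    have h1 := hker1 v hv
    have h2 := hker1 (-v) (by rw [map_neg, hv, neg_zero])
    rw [map_neg, norm_neg] at h2
    rw [abs_le]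
    constructor <;> linarith
  have hw0 : 0 ≤ h w := hpos w hwK
  have hwpos : 0 < h w := by
    rcases hw0.lt_or_eq with h' | h'
    · exact h'
    exfalso
    apply hh
    ext x
    have hfv : f (x - (f x / ‖f‖) • w) = 0 := by
      rw [map_sub, map_smul, smul_eq_mul, hfw]
      field_simp
      ring
    have h2 := hker _ hfv
    rw [← h'] at h2
    simp only [zero_div, zero_mul, abs_nonpos_iff] at h2
    have hx : h x = h (x - (f x / ‖f‖) • w) + f x / ‖f‖ * h w := by
      rw [map_sub, map_smul, smul_eq_mul]
      ring
    rw [hx, h2, ← h']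
    simp
  refine ⟨‖f‖ / h w, div_pos hF0 hwpos, ?_⟩
  have hFs : ‖f‖ / s ≤ 5 / 4 * δ := by
    rw [div_le_iff₀ hs0]
    nlinarith [hsd]
  refine ContinuousLinearMap.opNorm_le_bound _ (by positivity) fun x => ?_
  have hfv : f (x - (f x / ‖f‖) • w) = 0 := by
    rw [map_sub, map_smul, smul_eq_mul, hfw]
    field_simp
    ring
  have hvn : ‖x - (f x / ‖f‖) • w‖ ≤ 3 * ‖x‖ := by
    have h1 : ‖x - (f x / ‖f‖) • w‖ ≤ ‖x‖ + |f x / ‖f‖| * ‖w‖ := by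
      refine (norm_sub_le _ _).trans ?_
      rw [norm_smul, Real.norm_eq_abs]
    have h2 : |f x / ‖f‖| ≤ ‖x‖ := by
      rw [abs_div, abs_of_pos hF0, div_le_iff₀ hF0]
      calc |f x| = ‖f x‖ := (Real.norm_eq_abs _).symm
        _ ≤ ‖f‖ * ‖x‖ := f.le_opNorm x
        _ = ‖x‖ * ‖f‖ := by ring
    have h4 : |f x / ‖f‖| * ‖w‖ ≤ ‖x‖ * 2 :=
      mul_le_mul h2 hwn2 (norm_nonneg _) (norm_nonneg _)
    linarith
  have hxv : (f - (‖f‖ / h w) • h) x = -(‖f‖ / h w * h (x - (f x / ‖f‖) • w)) := by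
    have hhx : h (x - (f x / ‖f‖) • w) = h x - f x / ‖f‖ * h w := by
      rw [map_sub, map_smul, smul_eq_mul]
    simp only [ContinuousLinearMap.sub_apply, ContinuousLinearMap.smul_apply, smul_eq_mul]
    rw [hhx]
    field_simp
    ring
  rw [hxv, Real.norm_eq_abs, abs_neg, abs_mul, abs_of_pos (div_pos hF0 hwpos)]
  have h5 : ‖f‖ / h w * |h (x - (f x / ‖f‖) • w)| ≤
      ‖f‖ / h w * (h w / s * ‖x - (f x / ‖f‖) • w‖) :=
    mul_le_mul_of_nonneg_left (hker _ hfv) (div_pos hF0 hwpos).le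
  refine h5.trans ?_
  have h6 : ‖f‖ / h w * (h w / s * ‖x - (f x / ‖f‖) • w‖) =
      ‖f‖ / s * ‖x - (f x / ‖f‖) • w‖ := by
    field_simp
  rw [h6]
  have h7 : ‖f‖ / s * ‖x - (f x / ‖f‖) • w‖ ≤ 5 / 4 * δ * (3 * ‖x‖) :=
    mul_le_mul hFs hvn (norm_nonneg _) (by positivity)
  nlinarith [norm_nonneg x, hδ.le]


/-- The classical Bishop–Phelps theorem (support functionals are dense). -/
lemma bishop_phelps_classical [CompleteSpace E] (B : Set E) (hne : B.Nonempty)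
    (hconv : Convex ℝ B) (hclosed : IsClosed B) (hbdd : Bornology.IsBounded B)
    (f : E →L[ℝ] ℝ) {ε : ℝ} (hε : 0 < ε) :
    ∃ h : E →L[ℝ] ℝ, ∃ x₀ ∈ B, (∀ x ∈ B, h x ≤ h x₀) ∧ ‖h - f‖ ≤ ε := by
  rcases eq_or_ne f 0 with rfl | hf0
  · obtain ⟨x₀, hx₀⟩ := hne
    exact ⟨0, x₀, hx₀, fun x _ => le_rfl, by simp [hε.le]⟩
  have hfn : 0 < ‖f‖ := norm_pos_iff.2 hf0
  set δ := min (ε / 4) (‖f‖ / 10) with hδdef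
  have hδ : 0 < δ := lt_min (by positivity) (by positivity)
  have hδε : 4 * δ ≤ ε := by
    have := min_le_left (ε / 4) (‖f‖ / 10)
    rw [hδdef]
    linarith
  have hδf10 : 10 * δ ≤ ‖f‖ := by
    have := min_le_right (ε / 4) (‖f‖ / 10)
    rw [hδdef]
    linarith
  have hδf : δ < ‖f‖ := by linarith
  have hbddA : BddAbove (f '' B) := by
    obtain ⟨M, hM⟩ := hbdd.exists_norm_le
    refine ⟨‖f‖ * M, ?_⟩
    rintro y ⟨x, hx, rfl⟩
    calc f x ≤ |f x| := le_abs_self _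
      _ = ‖f x‖ := (Real.norm_eq_abs _).symm
      _ ≤ ‖f‖ * ‖x‖ := f.le_opNorm x
      _ ≤ ‖f‖ * M := by
          have := hM x hx
          nlinarith [norm_nonneg x]
  obtain ⟨z, hzB, hmax⟩ := bp_ekeland_point B hclosed hne f hbddA hδ
  obtain ⟨p, hp0, hpmin, hpK⟩ := bp_separation B hconv f hδ hδf hzB hmax
  obtain ⟨l, hl0, hlf⟩ := bp_phelps f (-p) hδ hδf10 (neg_ne_zero.2 hp0)
    (fun u hu => by simpa using neg_nonneg.2 (hpK u hu))
  refine ⟨l • (-p), z, hzB, fun x hx => ?_, ?_⟩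
  · simp only [ContinuousLinearMap.smul_apply, ContinuousLinearMap.neg_apply, smul_eq_mul]
    have := hpmin x hx
    nlinarith
  · calc ‖l • (-p) - f‖ = ‖f - l • (-p)‖ := norm_sub_rev _ _
      _ ≤ 4 * δ := hlf
      _ ≤ ε := hδε

end BishopPhelpsAux


open MeasureTheory Set

section Main

/-- **Group invariant Bishop-Phelps theorem.**
If `C ⊆ X` is nonempty, convex, closed, bounded and `G`-invariant, then the `G`-invariant
functionals attaining their supremum on `C` (at a `G`-invariant point) are dense in the
`G`-invariant dual `X*_G`. -/
theorem group_invariant_bishop_phelps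
    {X : Type*} [NormedAddCommGroup X] [NormedSpace ℝ X] [CompleteSpace X]
    {G : Type*} [Group G] [TopologicalSpace G] [IsTopologicalGroup G] [CompactSpace G]
    (ρ : G →* (X ≃L[ℝ] X))
    (hactcont : Continuous fun p : G × X => ρ p.1 p.2)
    (hnorminv : ∀ (g : G) (x : X), ‖ρ g x‖ = ‖x‖)
    (C : Set X) (hCne : C.Nonempty) (hCconv : Convex ℝ C) (hCclosed : IsClosed C)
    (hCbdd : Bornology.IsBounded C)
    (hCinv : ∀ g : G, (fun x => ρ g x) '' C = C) :
    ∀ f : X →L[ℝ] ℝ, (∀ (g : G) (x : X), f (ρ g x) = f x) → ∀ ε > (0 : ℝ),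
      ∃ h : X →L[ℝ] ℝ, (∀ (g : G) (x : X), h (ρ g x) = h x) ∧
        ∃ x₀ ∈ C, (∀ g : G, ρ g x₀ = x₀) ∧ (∀ x ∈ C, h x ≤ h x₀) ∧ ‖h - f‖ ≤ ε := by
  intro f hfinv ε hε
  classical
  borelize G
  haveI : Nonempty G := ⟨1⟩
  set μ : Measure G := Measure.haarMeasure (⊤ : TopologicalSpace.PositiveCompacts G) with hμ
  haveI : IsProbabilityMeasure μ := by
    constructor
    rw [hμ, ← TopologicalSpace.PositiveCompacts.coe_top (α := G)]
    exact Measure.haarMeasure_self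
  -- integrability of continuous functions on the compact group
  have hint : ∀ (F : G → X), Continuous F → Integrable F μ := by
    intro F hF
    have h1 := hF.continuousOn.integrableOn_compact' (μ := μ) isCompact_univ MeasurableSet.univ
    rwa [IntegrableOn, Measure.restrict_univ] at h1
  have hcont1 : ∀ x : X, Continuous fun g : G => ρ g x :=
    fun x => hactcont.comp (continuous_id.prodMk continuous_const)
  have hint1 : ∀ x : X, Integrable (fun g : G => ρ g x) μ := fun x => hint _ (hcont1 x)
  have hCmem : ∀ (g : G) {x : X}, x ∈ C → ρ g x ∈ C := by
    intro g x hx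
    have h1 : ρ g x ∈ (fun x => ρ g x) '' C := Set.mem_image_of_mem _ hx
    rwa [hCinv g] at h1
  -- the averaging operator P
  have hPlb : ∀ x : X, ‖∫ g, ρ g x ∂μ‖ ≤ 1 * ‖x‖ := by
    intro x
    rw [one_mul]
    calc ‖∫ g, ρ g x ∂μ‖ ≤ ∫ g, ‖ρ g x‖ ∂μ := norm_integral_le_integral_norm _
      _ = ∫ _g, ‖x‖ ∂μ := by simp_rw [hnorminv]
      _ = ‖x‖ := by simp
  set P : X →L[ℝ] X := LinearMap.mkContinuous
    { toFun := fun x => ∫ g, ρ g x ∂μ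
      map_add' := by
        intro x y
        show (∫ g, ρ g (x + y) ∂μ) = (∫ g, ρ g x ∂μ) + ∫ g, ρ g y ∂μ
        rw [show (fun g : G => ρ g (x + y)) = fun g => ρ g x + ρ g y from
          funext fun g => map_add _ _ _]
        exact integral_add (hint1 x) (hint1 y)
      map_smul' := by
        intro c x
        show (∫ g, ρ g (c • x) ∂μ) = c • ∫ g, ρ g x ∂μ
        rw [show (fun g : G => ρ g (c • x)) = fun g => c • (ρ g x : X) from
          funext fun g => _root_.map_smul (ρ g) c x]
        rw [integral_smul] } 1 hPlb with hPdef
  have hPapp : ∀ x : X, P x = ∫ g, ρ g x ∂μ := fun _ => rfl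
  have hPn : ∀ y : X, ‖P y‖ ≤ ‖y‖ := fun y => by
    rw [hPapp]
    simpa using hPlb y
  have hPmem : ∀ x ∈ C, P x ∈ C := by
    intro x hx
    rw [hPapp]
    exact hCconv.integral_mem hCclosed (ae_of_all _ fun g => hCmem g hx) (hint1 x)
  have hPfix : ∀ (g₀ : G) (x : X), ρ g₀ (P x) = P x := by
    intro g₀ x
    have e1 : ρ g₀ (P x) = (ρ g₀ : X →L[ℝ] X) (∫ g, ρ g x ∂μ) := by rw [hPapp]; rfl
    rw [e1, ← ContinuousLinearMap.integral_comp_comm _ (hint1 x)]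
    have e2 : (fun g : G => (ρ g₀ : X →L[ℝ] X) (ρ g x)) = fun g : G => ρ (g₀ * g) x := by
      funext g
      show ρ g₀ (ρ g x) = ρ (g₀ * g) x
      rw [map_mul]
      rfl
    rw [e2, hPapp]
    exact integral_mul_left_eq_self (fun g : G => (ρ g x : X)) g₀
  have hPconst : ∀ x : X, (∀ g : G, ρ g x = x) → P x = x := by
    intro x hfix
    rw [hPapp, show (fun g : G => ρ g x) = fun _ : G => x from funext fun g => hfix g]
    simp
  have hPf : ∀ x : X, f (P x) = f x := by
    intro x
    rw [hPapp, ← ContinuousLinearMap.integral_comp_comm _ (hint1 x),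
      show (fun g : G => f (ρ g x)) = fun _ : G => f x from funext fun g => hfinv g x]
    simp
  -- the set of invariant points of C
  set D : Set X := C ∩ {x : X | ∀ g : G, ρ g x = x} with hD
  have hfixconv : Convex ℝ {x : X | ∀ g : G, ρ g x = x} := by
    intro x hx y hy a b _ha _hb _hab
    show ∀ g : G, ρ g (a • x + b • y) = a • x + b • y
    intro g
    rw [map_add, _root_.map_smul, _root_.map_smul, hx g, hy g]
  have hDconv : Convex ℝ D := hCconv.inter hfixconv
  have hfixclosed : IsClosed {x : X | ∀ g : G, ρ g x = x} := by
    have e : {x : X | ∀ g : G, ρ g x = x} = ⋂ g : G, {x : X | ρ g x = x} := by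
      ext x; simp
    rw [e]
    exact isClosed_iInter fun g => isClosed_eq ((ρ g).continuous) continuous_id
  have hDclosed : IsClosed D := hCclosed.inter hfixclosed
  have hDbdd : Bornology.IsBounded D := hCbdd.subset Set.inter_subset_left
  obtain ⟨c₀, hc₀⟩ := hCne
  have hDne : D.Nonempty := ⟨P c₀, hPmem c₀ hc₀, fun g => hPfix g c₀⟩
  -- the two-sided averaging operator R
  have hcont2 : ∀ x : X, Continuous fun g : G => P (ρ g⁻¹ x) :=
    fun x => P.continuous.comp ((hcont1 x).comp continuous_inv)
  have hint2 : ∀ x : X, Integrable (fun g : G => P (ρ g⁻¹ x)) μ := fun x => hint _ (hcont2 x)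
  have hRlb : ∀ x : X, ‖∫ g, P (ρ g⁻¹ x) ∂μ‖ ≤ 1 * ‖x‖ := by
    intro x
    rw [one_mul]
    calc ‖∫ g, P (ρ g⁻¹ x) ∂μ‖ ≤ ∫ g, ‖P (ρ g⁻¹ x)‖ ∂μ := norm_integral_le_integral_norm _
      _ ≤ ∫ _g, ‖x‖ ∂μ := by
          refine integral_mono_of_nonneg (ae_of_all _ fun g => norm_nonneg _)
            (integrable_const _) (ae_of_all _ fun g => ?_)
          calc ‖P (ρ g⁻¹ x)‖ ≤ ‖ρ g⁻¹ x‖ := hPn _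
            _ = ‖x‖ := hnorminv _ _
      _ = ‖x‖ := by simp
  set R : X →L[ℝ] X := LinearMap.mkContinuous
    { toFun := fun x => ∫ g, P (ρ g⁻¹ x) ∂μ
      map_add' := by
        intro x y
        show (∫ g, P (ρ g⁻¹ (x + y)) ∂μ) = (∫ g, P (ρ g⁻¹ x) ∂μ) + ∫ g, P (ρ g⁻¹ y) ∂μ
        rw [show (fun g : G => P (ρ g⁻¹ (x + y))) = fun g => P (ρ g⁻¹ x) + P (ρ g⁻¹ y) from
          funext fun g => by rw [map_add, map_add]]
        exact integral_add (hint2 x) (hint2 y)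
      map_smul' := by
        intro c x
        show (∫ g, P (ρ g⁻¹ (c • x)) ∂μ) = c • ∫ g, P (ρ g⁻¹ x) ∂μ
        rw [show (fun g : G => P (ρ g⁻¹ (c • x))) = fun g => c • P (ρ g⁻¹ x) from
          funext fun g => by rw [_root_.map_smul (ρ g⁻¹) c x, _root_.map_smul]]
        rw [integral_smul] } 1 hRlb with hRdef
  have hRapp : ∀ x : X, R x = ∫ g, P (ρ g⁻¹ x) ∂μ := fun _ => rfl
  have hRn : ‖R‖ ≤ 1 := LinearMap.mkContinuous_norm_le _ zero_le_one _
  have hRinv : ∀ (g₀ : G) (x : X), R (ρ g₀ x) = R x := by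
    intro g₀ x
    rw [hRapp, hRapp]
    have e1 : (fun g : G => P (ρ g⁻¹ (ρ g₀ x))) = fun g : G => P (ρ ((g₀⁻¹ * g)⁻¹) x) := by
      funext g
      congr 1
      show ρ g⁻¹ (ρ g₀ x) = ρ ((g₀⁻¹ * g)⁻¹) x
      rw [mul_inv_rev, inv_inv, map_mul]
      rfl
    rw [e1]
    exact integral_mul_left_eq_self (fun k : G => P (ρ k⁻¹ x)) g₀⁻¹
  have hRmem : ∀ x ∈ C, R x ∈ D := by
    intro x hx
    rw [hRapp]
    exact hDconv.integral_mem hDclosed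
      (ae_of_all _ fun g => ⟨hPmem _ (hCmem g⁻¹ hx), fun g₀ => hPfix g₀ _⟩) (hint2 x)
  have hRconst : ∀ x : X, (∀ g : G, ρ g x = x) → R x = x := by
    intro x hfix
    rw [hRapp, show (fun g : G => P (ρ g⁻¹ x)) = fun _ : G => x from
      funext fun g => by rw [hfix, hPconst x hfix]]
    simp
  have hRf : ∀ x : X, f (R x) = f x := by
    intro x
    rw [hRapp, ← ContinuousLinearMap.integral_comp_comm _ (hint2 x),
      show (fun g : G => f (P (ρ g⁻¹ x))) = fun _ : G => f x from
        funext fun g => by rw [hPf, hfinv]]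
    simp
  -- apply the classical Bishop–Phelps theorem on D
  obtain ⟨h', x₀, hx₀D, hmax', hnorm'⟩ :=
    bishop_phelps_classical D hDne hDconv hDclosed hDbdd f hε
  refine ⟨h'.comp R, fun g x => ?_, x₀, hx₀D.1, hx₀D.2, fun x hx => ?_, ?_⟩
  · show h' (R (ρ g x)) = h' (R x)
    rw [hRinv]
  · show h' (R x) ≤ h' (R x₀)
    rw [hRconst x₀ hx₀D.2]
    exact hmax' _ (hRmem x hx)
  · have e : h'.comp R - f = (h' - f).comp R := by
      ext x
      simp only [ContinuousLinearMap.sub_apply, ContinuousLinearMap.comp_apply]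
      rw [hRf x]
    rw [e]
    calc ‖(h' - f).comp R‖ ≤ ‖h' - f‖ * ‖R‖ := ContinuousLinearMap.opNorm_comp_le _ _
      _ ≤ ε * 1 := mul_le_mul hnorm' hRn (norm_nonneg _) hε.le
      _ = ε := mul_one ε

end Main
end
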